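/- arXiv:2005.05553 — 7 statements merged into one kernel-verified Lean document; each statement's English description precedes it below -/
import Mathlib

section
/- Let F be a field, f ∈ F[t] irreducible of degree d, x ∈ Mat_d(F) with characteristic polynomial f, and E = F[x]. Then the kernel of the linear map ad_x : Mat_d(F) → Mat_d(F), y ↦ xy − yx, equals E. -/
/-!
If the characteristic polynomial `f` of `x` is irreducible, every nonzero vector `v` is cyclic
for `x`: a nonzero `q` of degree `< d` is coprime to `f`, so `q(x)` is invertible by
Cayley–Hamilton, and `q ↦ q(x) v` is an injective, hence bijective, linear map from polynomials
of degree `< d` to `F^d`. If `y` commutes with `x` and `y v = p(x) v`, then `y` and `p(x)` agree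
on every `q(x) v`, that is, everywhere.
-/

open Polynomial Matrix

theorem IsCoprime.isUnit_aeval {R A : Type*} [CommRing R] [Ring A] [Algebra R A]
    {p q : R[X]} (h : IsCoprime p q) {a : A} (hp : aeval a p = 0) : IsUnit (aeval a q) := by
  obtain ⟨u, w, huw⟩ := h
  have hwq : aeval a w * aeval a q = 1 := by simpa [hp] using congrArg (aeval a) huw
  refine ⟨⟨aeval a q, aeval a w, ?_, hwq⟩, rfl⟩
  rwa [← map_mul, mul_comm, map_mul]

section

variable {R n : Type*} [CommRing R] [Fintype n] [DecidableEq n]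

theorem Matrix.mem_adjoin_singleton_of_commute_of_cyclic {x y : Matrix n n R} {v : n → R}
    (hv : ∀ w, ∃ q : R[X], aeval x q *ᵥ v = w) (hxy : Commute x y) :
    y ∈ Algebra.adjoin R {x} := by
  obtain ⟨p, hp⟩ := hv (y *ᵥ v)
  rw [Algebra.adjoin_singleton_eq_range_aeval]
  refine ⟨p, ext_iff_mulVec.mpr fun w => ?_⟩
  obtain ⟨q, rfl⟩ := hv w
  have hyq : Commute y (aeval x q) :=
    Algebra.commute_of_mem_adjoin_singleton_of_commute (aeval_mem_adjoin_singleton R x) hxy.symm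
  calc aeval x p *ᵥ aeval x q *ᵥ v = aeval x q *ᵥ aeval x p *ᵥ v := by
        rw [mulVec_mulVec, mulVec_mulVec, ← map_mul, ← map_mul, mul_comm]
    _ = y *ᵥ aeval x q *ᵥ v := by rw [hp, mulVec_mulVec, mulVec_mulVec, hyq.eq]

end

section

variable {K n : Type*} [Field K] [Fintype n] [DecidableEq n]

theorem Matrix.exists_aeval_mulVec_eq_of_irreducible_charpoly {x : Matrix n n K}
    (hx : Irreducible x.charpoly) {v : n → K} (hv : v ≠ 0) (w : n → K) :
    ∃ q : K[X], aeval x q *ᵥ v = w := by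
  let φ : degreeLT K (Fintype.card n) →ₗ[K] n → K :=
    { toFun q := aeval x (q : K[X]) *ᵥ v
      map_add' _ _ := by simp [add_mulVec]
      map_smul' _ _ := by simp [smul_mulVec] }
  have hφ : Function.Injective φ := by
    refine (injective_iff_map_eq_zero φ).mpr fun ⟨q, hq⟩ hqv => ?_
    rw [Submodule.mk_eq_zero]
    by_contra hq0
    have hcop : IsCoprime x.charpoly q := by
      refine hx.coprime_iff_not_dvd.mpr fun hdvd => ?_
      exact (mem_degreeLT.mp hq).not_ge
        (charpoly_degree_eq_dim x ▸ degree_le_of_dvd hdvd hq0)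
    exact hv <| mulVec_injective_of_isUnit (hcop.isUnit_aeval (aeval_self_charpoly x))
      (by rw [mulVec_zero]; exact hqv)
  have hdim : Module.finrank K (degreeLT K (Fintype.card n)) = Module.finrank K (n → K) := by
    simp [(degreeLTEquiv K _).finrank_eq]
  obtain ⟨q, hq⟩ := (LinearMap.injective_iff_surjective_of_finrank_eq_finrank hdim).mp hφ w
  exact ⟨q, hq⟩

theorem Matrix.commute_iff_mem_adjoin_singleton_of_irreducible_charpoly {x y : Matrix n n K}
    (hx : Irreducible x.charpoly) : Commute x y ↔ y ∈ Algebra.adjoin K {x} := by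
  have : Nonempty n := Fintype.card_pos_iff.mp (charpoly_natDegree_eq_dim x ▸ hx.natDegree_pos)
  obtain ⟨v, hv⟩ := exists_ne (0 : n → K)
  exact ⟨mem_adjoin_singleton_of_commute_of_cyclic
    (exists_aeval_mulVec_eq_of_irreducible_charpoly hx hv), Algebra.commute_of_mem_adjoin_self⟩

end

theorem stmt2_general (F : Type*) [Field F] (d : ℕ) (f : Polynomial F)
    (hf : Irreducible f)
    (x : Matrix (Fin d) (Fin d) F) (hx : x.charpoly = f) :
    ∀ y : Matrix (Fin d) (Fin d) F,
      x * y - y * x = 0 ↔ y ∈ Algebra.adjoin F ({x} : Set (Matrix (Fin d) (Fin d) F)) := by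
  subst hx
  intro y
  rw [sub_eq_zero]
  exact commute_iff_mem_adjoin_singleton_of_irreducible_charpoly hf

/-- The kernel of `ad_x : Mat_d(F) → Mat_d(F)`, `y ↦ x*y - y*x`, equals `E = F[x]`,
when `x` has irreducible characteristic polynomial `f` of degree `d`. -/
theorem stmt2 (F : Type*) [Field F] (d : ℕ) (f : Polynomial F)
    (hf : Irreducible f) (hdeg : f.natDegree = d)
    (x : Matrix (Fin d) (Fin d) F) (hx : x.charpoly = f) :
    ∀ y : Matrix (Fin d) (Fin d) F,
      x * y - y * x = 0 ↔ y ∈ Algebra.adjoin F ({x} : Set (Matrix (Fin d) (Fin d) F)) :=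
  stmt2_general F d f hf x hx
end

section
/- Let F be a field and let M1 ∈ Mat_{n1}(F), M2 ∈ Mat_{n2}(F) have coprime characteristic polynomials. Then the bilinear map Mat_{n1×n2}(F) × Mat_{n2×n1}(F) → F given by (a,b) ↦ tr(M1·a·b) − tr(b·a·M2) is a perfect pairing (its left and right kernels are zero). -/
/-!
Both kernels reduce to Sylvester's theorem. By cyclicity of the trace,
`tr (M1 a b) - tr (b a M2) = tr ((M1 a - a M2) b) = tr ((b M1 - M2 b) a)`, and the trace form
`(X, Y) ↦ tr (X Y)` is nondegenerate, so a vector in the left (right) kernel intertwines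
`M1` and `M2` (resp. `M2` and `M1`). An intertwiner `a` satisfies `p(M1) a = a p(M2)` for every
polynomial `p`; writing `1 = u χ₁ + v χ₂` and using Cayley–Hamilton gives
`a = a (u χ₁ + v χ₂)(M2) = u(M1) χ₁(M1) a = 0`.
-/

open Polynomial

namespace Matrix

section Trace

variable {R : Type*} {m n : Type*} [Fintype m] [Fintype n] [CommRing R]
  (A : Matrix m m R) (B : Matrix n n R) (X : Matrix m n R) (Y : Matrix n m R)

theorem trace_mul_mul_sub_trace_mul_mul_eq_trace_sub_mul_left :
    (A * X * Y).trace - (Y * X * B).trace = ((A * X - X * B) * Y).trace := by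
  rw [Matrix.sub_mul, trace_sub, ← trace_mul_cycle X B Y]

theorem trace_mul_mul_sub_trace_mul_mul_eq_trace_sub_mul_right :
    (A * X * Y).trace - (Y * X * B).trace = ((Y * A - B * Y) * X).trace := by
  rw [Matrix.sub_mul, trace_sub, trace_mul_cycle A X Y, trace_mul_cycle Y X B]

end Trace

variable {R : Type*} {m n : Type*} [Fintype m] [DecidableEq m] [Fintype n] [DecidableEq n]

section Semiring

variable [Semiring R] {A : Matrix m m R} {B : Matrix n n R} {X : Matrix m n R}

theorem pow_mul_eq_mul_pow_of_mul_eq_mul (h : A * X = X * B) (k : ℕ) :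
    A ^ k * X = X * B ^ k := by
  induction k with
  | zero => simp
  | succ k ih => rw [pow_succ, Matrix.mul_assoc, h, ← Matrix.mul_assoc, ih, Matrix.mul_assoc,
      ← pow_succ]

end Semiring

section CommRing

variable [CommRing R] {A : Matrix m m R} {B : Matrix n n R} {X : Matrix m n R}

theorem aeval_mul_eq_mul_aeval_of_mul_eq_mul (h : A * X = X * B) (p : R[X]) :
    aeval A p * X = X * aeval B p := by
  simp only [aeval_eq_sum_range, Matrix.sum_mul, Matrix.mul_sum, Matrix.smul_mul,
    Matrix.mul_smul, pow_mul_eq_mul_pow_of_mul_eq_mul h]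

theorem eq_zero_of_mul_eq_mul_of_isCoprime_charpoly
    (hcop : IsCoprime A.charpoly B.charpoly) (h : A * X = X * B) : X = 0 := by
  obtain ⟨u, v, huv⟩ := hcop
  calc X = X * aeval B (u * A.charpoly + v * B.charpoly) := by rw [huv, map_one, Matrix.mul_one]
    _ = aeval A u * (aeval A A.charpoly * X) := by
      rw [map_add, map_mul, map_mul, aeval_self_charpoly, mul_zero, add_zero,
        aeval_mul_eq_mul_aeval_of_mul_eq_mul h, ← Matrix.mul_assoc,
        ← aeval_mul_eq_mul_aeval_of_mul_eq_mul h, Matrix.mul_assoc]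
    _ = 0 := by rw [aeval_self_charpoly, Matrix.zero_mul, Matrix.mul_zero]

end CommRing

end Matrix

open Matrix in
/-- For `M1`, `M2` with coprime characteristic polynomials, the bilinear map
`(a, b) ↦ tr (M1 * a * b) - tr (b * a * M2)` on
`Mat_{n1×n2}(F) × Mat_{n2×n1}(F)` is a perfect pairing: its left and right
kernels are zero. -/
theorem stmt8 (F : Type*) [Field F] (n1 n2 : ℕ)
    (M1 : Matrix (Fin n1) (Fin n1) F) (M2 : Matrix (Fin n2) (Fin n2) F)
    (hcop : IsCoprime M1.charpoly M2.charpoly) :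
    let pair : Matrix (Fin n1) (Fin n2) F → Matrix (Fin n2) (Fin n1) F → F :=
      fun a b => (M1 * a * b).trace - (b * a * M2).trace
    (∀ a : Matrix (Fin n1) (Fin n2) F, (∀ b, pair a b = 0) → a = 0) ∧
      (∀ b : Matrix (Fin n2) (Fin n1) F, (∀ a, pair a b = 0) → b = 0) := by
  refine ⟨fun a ha => ?_, fun b hb => ?_⟩
  · have hint : M1 * a - a * M2 = 0 := ext_iff_trace_mul_right.mpr fun b => by
      rw [← trace_mul_mul_sub_trace_mul_mul_eq_trace_sub_mul_left, Matrix.zero_mul, trace_zero]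
      exact ha b
    exact eq_zero_of_mul_eq_mul_of_isCoprime_charpoly hcop (sub_eq_zero.mp hint)
  · have hint : b * M1 - M2 * b = 0 := ext_iff_trace_mul_right.mpr fun a => by
      rw [← trace_mul_mul_sub_trace_mul_mul_eq_trace_sub_mul_right, Matrix.zero_mul, trace_zero]
      exact hb a
    exact eq_zero_of_mul_eq_mul_of_isCoprime_charpoly hcop.symm (sub_eq_zero.mp hint).symm
end

section
/- Let o be a complete discrete valuation ring with finite residue field and uniformizer π, and let O = o[x] be an unramified extension generated by a root x ∈ Mat_d(o) of a monic polynomial f ∈ o[t] whose reduction mod π is irreducible. Write o_ℓ = o/(π^ℓ) and O_ℓ = O/(π^ℓ), and view Mat_m(O_ℓ) ⊆ Mat_{md}(o_ℓ). Let M ∈ Mat_{md}(o_ℓ) be such that its reduction mod π lies in Mat_m(O_1) and has characteristic polynomial f̄^m. Then M is GL_{md}(o_ℓ)-conjugate to a matrix B ∈ Mat_m(O_ℓ) whose centralizer in Mat_{md}(o_ℓ) is contained in Mat_m(O_ℓ). -/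
/-!
Let `O = o_ℓ[t]/(f)`. A root `N ∈ Mat_n(o_ℓ)` of `f` makes `o_ℓ^n` an `O`-module, and this module
is free: a basis of its reduction over the residue field `O/(π)` lifts, by Nakayama, to a
surjection `O^r → o_ℓ^n`, and the residual dimension count `n = rd` makes it bijective. Hence any
two roots of `f` in `Mat_n(o_ℓ)` are conjugate, and for `n = d` a matrix commuting with a root `N`
is a polynomial in `N`.

As `f̄` is separable and the reduced characteristic polynomial of `M` is `f̄^m`, Newton's iteration
in `o_ℓ[M]` yields a root `Y` of `f` that is a polynomial in `M`. Conjugate `Y` to the block scalar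
matrix `X = diag(x, …, x)` and let `B` be the conjugate of `M`: whatever commutes with `B` commutes
with `X`, and blockwise the case `n = d` identifies the centralizer of `X` with `Mat_m(O_ℓ)`.
-/

open Polynomial
open scoped Matrix

section Newton

variable {R F A : Type*} [CommRing R] [CommRing F] [Ring A] [Algebra R A] {ρ : R →+* F}

theorem isNilpotent_aeval_of_map_eq_zero (hker : RingHom.ker ρ ≤ nilradical R) {q : R[X]}
    (hq : q.map ρ = 0) (a : A) : IsNilpotent (aeval a q) :=
  (Polynomial.isNilpotent_iff.mpr fun i => hker <| by
    rw [RingHom.mem_ker, ← coeff_map, hq, coeff_zero]).map (aeval a)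

theorem exists_mem_adjoin_aeval_eq_zero (hρ : Function.Surjective ρ)
    (hker : RingHom.ker ρ ≤ nilradical R) {p χ : R[X]} {m : ℕ}
    (hsep : (p.map ρ).Separable) (hχ : χ.map ρ = p.map ρ ^ m) {a : A} (ha : aeval a χ = 0) :
    ∃ y ∈ Algebra.adjoin R {a}, aeval y p = 0 := by
  set a' : Algebra.adjoin R {a} := ⟨a, Algebra.self_mem_adjoin_singleton R a⟩
  have hnil : IsNilpotent (aeval a' p) := by
    have ha' : aeval a' χ = 0 := Subtype.ext (by simpa [a'] using ha)
    have h := isNilpotent_aeval_of_map_eq_zero hker (q := p ^ m - χ)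
      (by rw [Polynomial.map_sub, Polynomial.map_pow, hχ, sub_self]) a'
    exact IsNilpotent.of_pow (m := m) (by simpa [ha'] using h)
  have hunit : IsUnit (aeval a' (derivative p)) := by
    obtain ⟨u, v, huv⟩ := hsep
    obtain ⟨u, rfl⟩ := Polynomial.map_surjective ρ hρ u
    obtain ⟨v, rfl⟩ := Polynomial.map_surjective ρ hρ v
    set t := aeval a' (u * p + v * derivative p - 1)
    have ht : IsNilpotent t := isNilpotent_aeval_of_map_eq_zero hker
      (by simp [← derivative_map, huv]) a'
    have h : aeval a' v * aeval a' (derivative p) = 1 + (t - aeval a' u * aeval a' p) := by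
      simp only [t, map_sub, map_add, map_mul, map_one]
      ring
    refine isUnit_of_mul_isUnit_right (h ▸ IsNilpotent.isUnit_add_left_of_commute ?_ isUnit_one
      (Commute.all _ _))
    exact (Commute.all _ _).isNilpotent_sub ht ((Commute.all _ _).isNilpotent_mul_left hnil)
  obtain ⟨y, ⟨-, hy⟩, -⟩ := existsUnique_nilpotent_sub_and_aeval_eq_zero hnil hunit
  exact ⟨y, y.2, by rw [← aeval_subalgebra_coe, hy, ZeroMemClass.coe_zero]⟩

end Newton

theorem Commute.units_conj_of_mem_adjoin {R A : Type*} [CommSemiring R] [Semiring A] [Algebra R A]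
    {a b y : A} (g : Aˣ) (hb : b ∈ Algebra.adjoin R {a}) (hy : Commute y (g * a * ↑g⁻¹)) :
    Commute y (g * b * ↑g⁻¹) := by
  let e := MulSemiringAction.toAlgEquiv R A (ConjAct.toConjAct g)
  have he : ∀ x, e x = g * x * ↑g⁻¹ := ConjAct.units_smul_def _
  rw [← he] at hy ⊢
  refine Algebra.commute_of_mem_adjoin_singleton_of_commute (R := R) ?_ hy
  exact AlgHom.map_adjoin_singleton (e : A →ₐ[R] A) a ▸ ⟨b, hb, rfl⟩

namespace AdjoinRoot

variable {R A : Type*} [CommRing R] [Semiring A] [Algebra R A]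

noncomputable def liftₐ (p : R[X]) (a : A) (ha : aeval a p = 0) : AdjoinRoot p →ₐ[R] A :=
  Ideal.Quotient.liftₐ _ (aeval a) fun q hq => by
    obtain ⟨c, rfl⟩ := Ideal.mem_span_singleton.mp hq
    rw [map_mul, ha, zero_mul]

@[simp]
theorem liftₐ_mk (p : R[X]) (a : A) (ha : aeval a p = 0) (q : R[X]) :
    liftₐ p a ha (mk p q) = aeval a q := rfl

@[simp]
theorem liftₐ_root (p : R[X]) (a : A) (ha : aeval a p = 0) : liftₐ p a ha (root p) = a := by
  rw [root, liftₐ_mk, aeval_X]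

theorem liftₐ_mem_adjoin (p : R[X]) (a : A) (ha : aeval a p = 0) (c : AdjoinRoot p) :
    liftₐ p a ha c ∈ Algebra.adjoin R {a} := by
  obtain ⟨q, rfl⟩ := mk_surjective c
  rw [liftₐ_mk, Algebra.adjoin_singleton_eq_range_aeval]
  exact ⟨q, rfl⟩

theorem map_mk {S : Type*} [CommRing S] (f : R →+* S) (p : R[X]) (q : S[X]) (h : q ∣ p.map f)
    (g : R[X]) : map f p q h (mk p g) = mk q (g.map f) := by
  rw [map, lift_mk, ← eval₂_map, ← aeval_eq]
  rfl

end AdjoinRoot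

open AdjoinRoot

theorem Matrix.map_aeval {R S n : Type*} [CommSemiring R] [CommSemiring S] [Fintype n]
    [DecidableEq n] (σ : R →+* S) (N : Matrix n n R) (q : R[X]) :
    (aeval N q).map σ = aeval (N.map σ) (q.map σ) :=
  map_aeval_eq_aeval_map (ψ := σ.mapMatrix)
    (by ext; simp [Matrix.algebraMap_matrix_apply, apply_ite σ]) q N

theorem Matrix.map_liftₐ {R S n : Type*} [CommRing R] [CommRing S] [Fintype n] [DecidableEq n]
    {σ : R →+* S} {p : R[X]} (N : Matrix n n R) (hN : aeval N p = 0)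
    (hN' : aeval (N.map σ) (p.map σ) = 0) (c : AdjoinRoot p) :
    (liftₐ p N hN c).map σ = liftₐ (p.map σ) (N.map σ) hN' (AdjoinRoot.map σ p _ dvd_rfl c) := by
  induction c using AdjoinRoot.induction_on with
  | ih q => rw [liftₐ_mk, map_mk, liftₐ_mk, Matrix.map_aeval]

theorem mem_smul_top_of_forall_mem {R n : Type*} [CommSemiring R] [Fintype n] [DecidableEq n]
    {I : Ideal R} {w : n → R} (hw : ∀ j, w j ∈ I) : w ∈ I • (⊤ : Submodule R (n → R)) := by
  rw [pi_eq_sum_univ w]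
  exact Submodule.sum_mem _ fun j _ => Submodule.smul_mem_smul (hw j) Submodule.mem_top

section MatrixRoots

variable {n : Type*} [Fintype n] [DecidableEq n]

theorem exists_span_liftₐ_mulVec {K : Type*} [Field K] {q : K[X]} [Fact (Irreducible q)]
    (N : Matrix n n K) (hN : aeval N q = 0) :
    ∃ r, r * q.natDegree = Fintype.card n ∧ ∃ b : Fin r → n → K,
      ∀ u, ∃ c : Fin r → AdjoinRoot q, ∑ i, liftₐ q N hN (c i) *ᵥ b i = u := by
  let : Module (AdjoinRoot q) (n → K) := Module.compHom (n → K)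
    ((Matrix.toLinAlgEquiv' : Matrix n n K ≃ₐ[K] Module.End K (n → K)).toRingHom.comp
      (liftₐ q N hN).toRingHom)
  have hsmul : ∀ (c : AdjoinRoot q) (v : n → K), c • v = liftₐ q N hN c *ᵥ v := fun _ _ => rfl
  have : IsScalarTower K (AdjoinRoot q) (n → K) := ⟨fun a c v => by
    rw [hsmul, hsmul, map_smul, Matrix.smul_mulVec]⟩
  have hq : q ≠ 0 := (Fact.out : Irreducible q).ne_zero
  have : Module.Finite K (AdjoinRoot q) := (AdjoinRoot.powerBasis hq).finite
  have : Module.Finite (AdjoinRoot q) (n → K) := Module.Finite.of_restrictScalars_finite K _ _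
  refine ⟨Module.finrank (AdjoinRoot q) (n → K), ?_, Module.finBasis (AdjoinRoot q) (n → K),
    fun u => ⟨(Module.finBasis (AdjoinRoot q) (n → K)).repr u, ?_⟩⟩
  · rw [mul_comm, ← Module.finrank_fintype_fun_eq_card K,
      ← Module.finrank_mul_finrank K (AdjoinRoot q), (AdjoinRoot.powerBasis hq).finrank,
      AdjoinRoot.powerBasis_dim]
  · simp_rw [← hsmul]
    exact (Module.finBasis _ _).sum_repr u

variable {R F : Type*} [CommRing R] [Field F] {ρ : R →+* F} {p : R[X]}

noncomputable def adjoinRootLinearCombination {r : ℕ} (N : Matrix n n R) (hN : aeval N p = 0)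
    (v : Fin r → n → R) : (Fin r → AdjoinRoot p) →ₗ[R] (n → R) where
  toFun c := ∑ i, liftₐ p N hN (c i) *ᵥ v i
  map_add' c c' := by
    simp only [Pi.add_apply, map_add, Matrix.add_mulVec, Finset.sum_add_distrib]
  map_smul' s c := by
    simp only [Pi.smul_apply, map_smul, Matrix.smul_mulVec, Finset.smul_sum, RingHom.id_apply]

theorem adjoinRootLinearCombination_smul {r : ℕ} (N : Matrix n n R) (hN : aeval N p = 0)
    (v : Fin r → n → R) (a : AdjoinRoot p) (c : Fin r → AdjoinRoot p) :
    adjoinRootLinearCombination N hN v (a • c) =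
      liftₐ p N hN a *ᵥ adjoinRootLinearCombination N hN v c := by
  simp only [adjoinRootLinearCombination, LinearMap.coe_mk, AddHom.coe_mk, Pi.smul_apply,
    smul_eq_mul, map_mul, ← Matrix.mulVec_mulVec, Matrix.mulVec_sum]

theorem adjoinRootLinearCombination_surjective (hρ : Function.Surjective ρ)
    (hker : RingHom.ker ρ ≤ Ideal.jacobson ⊥) {r : ℕ} (N : Matrix n n R) (hN : aeval N p = 0)
    (hN' : aeval (N.map ρ) (p.map ρ) = 0) (v : Fin r → n → R)
    (hv : ∀ u, ∃ c : Fin r → AdjoinRoot (p.map ρ),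
      ∑ i, liftₐ (p.map ρ) (N.map ρ) hN' (c i) *ᵥ (ρ ∘ v i) = u) :
    Function.Surjective (adjoinRootLinearCombination N hN v) := by
  have hθ : Function.Surjective (AdjoinRoot.map ρ p (p.map ρ) dvd_rfl) := fun e => by
    obtain ⟨q, rfl⟩ := AdjoinRoot.mk_surjective e
    obtain ⟨q, rfl⟩ := Polynomial.map_surjective ρ hρ q
    exact ⟨mk p q, map_mk _ _ _ _ q⟩
  set Φ := adjoinRootLinearCombination N hN v
  rw [← LinearMap.range_eq_top, eq_top_iff]
  refine Submodule.le_of_le_smul_of_le_jacobson_bot Module.Finite.fg_top hker fun u _ => ?_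
  obtain ⟨c, hc⟩ := hv (ρ ∘ u)
  choose c' hc' using fun i => hθ (c i)
  rw [show u = Φ c' + (u - Φ c') by abel]
  refine Submodule.add_mem_sup (LinearMap.mem_range_self Φ c')
    (mem_smul_top_of_forall_mem fun j => ?_)
  rw [RingHom.mem_ker, Pi.sub_apply, map_sub, sub_eq_zero]
  refine (congrFun hc j).symm.trans ?_
  simp only [Φ, adjoinRootLinearCombination, LinearMap.coe_mk, AddHom.coe_mk, Finset.sum_apply,
    map_sum, RingHom.map_mulVec, Matrix.map_liftₐ _ _ hN', hc']

theorem exists_linearEquiv_adjoinRoot_pi (hρ : Function.Surjective ρ)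
    (hker : RingHom.ker ρ ≤ Ideal.jacobson ⊥) (hp : p.Monic) (hirr : Irreducible (p.map ρ))
    (N : Matrix n n R) (hN : aeval N p = 0) :
    ∃ r, r * p.natDegree = Fintype.card n ∧ ∃ Φ : (Fin r → AdjoinRoot p) ≃ₗ[R] (n → R),
      ∀ a c, Φ (a • c) = liftₐ p N hN a *ᵥ Φ c := by
  have : Fact (Irreducible (p.map ρ)) := ⟨hirr⟩
  have hN' : aeval (N.map ρ) (p.map ρ) = 0 := by
    rw [← Matrix.map_aeval, hN, Matrix.map_zero _ (map_zero ρ)]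
  obtain ⟨r, hr, b, hb⟩ := exists_span_liftₐ_mulVec (N.map ρ) hN'
  rw [hp.natDegree_map] at hr
  let v : Fin r → n → R := fun i j => Function.surjInv hρ (b i j)
  have hv : ∀ i, ρ ∘ v i = b i := fun i => funext fun j => Function.surjInv_eq hρ _
  have hsurj := adjoinRootLinearCombination_surjective hρ hker N hN hN' v (by simpa only [hv])
  have : Nontrivial R := ρ.domain_nontrivial
  have : Module.Free R (AdjoinRoot p) := .of_basis (AdjoinRoot.powerBasis' hp).basis
  have : Module.Finite R (AdjoinRoot p) := (AdjoinRoot.powerBasis' hp).finite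
  have hrank : Module.finrank R (Fin r → AdjoinRoot p) ≤ Module.finrank R (n → R) := by
    rw [Module.finrank_pi_fintype, (AdjoinRoot.powerBasis' hp).finrank,
      AdjoinRoot.powerBasis'_dim, Module.finrank_fintype_fun_eq_card, Finset.sum_const,
      Finset.card_univ, Fintype.card_fin, smul_eq_mul, hr]
  exact ⟨r, hr, .ofBijective _ (OrzechProperty.bijective_of_surjective_of_finrank_le _ hsurj hrank),
    adjoinRootLinearCombination_smul N hN v⟩

theorem exists_conj_eq_of_aeval_eq_zero (hρ : Function.Surjective ρ)
    (hker : RingHom.ker ρ ≤ Ideal.jacobson ⊥) (hp : p.Monic) (hirr : Irreducible (p.map ρ))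
    {X Y : Matrix n n R} (hX : aeval X p = 0) (hY : aeval Y p = 0) :
    ∃ g : (Matrix n n R)ˣ,
      (g : Matrix n n R) * Y * ((g⁻¹ : (Matrix n n R)ˣ) : Matrix n n R) = X := by
  obtain ⟨r, hr, ΦY, hΦY⟩ := exists_linearEquiv_adjoinRoot_pi hρ hker hp hirr Y hY
  obtain ⟨r', hr', ΦX, hΦX⟩ := exists_linearEquiv_adjoinRoot_pi hρ hker hp hirr X hX
  obtain rfl : r = r' := Nat.eq_of_mul_eq_mul_right
    (hp.natDegree_map ρ ▸ hirr.natDegree_pos) (hr.trans hr'.symm)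
  let e := ΦY.symm.trans ΦX
  have he : ∀ w, e (Y *ᵥ w) = X *ᵥ e w := fun w => by
    obtain ⟨c, rfl⟩ := ΦY.surjective w
    rw [← liftₐ_root p Y hY, ← hΦY, ← liftₐ_root p X hX, LinearEquiv.trans_apply,
      LinearEquiv.trans_apply, ΦY.symm_apply_apply, ΦY.symm_apply_apply, hΦX]
  let g := Matrix.GeneralLinearGroup.toLin.symm (LinearMap.GeneralLinearGroup.ofLinearEquiv e)
  have hg : ∀ w, (g : Matrix n n R) *ᵥ w = e w := LinearMap.toMatrix'_mulVec e.toLinearMap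
  refine ⟨g, ?_⟩
  rw [Units.mul_inv_eq_iff_eq_mul, Matrix.ext_iff_mulVec]
  intro w
  rw [← Matrix.mulVec_mulVec, ← Matrix.mulVec_mulVec, hg, hg, he]

theorem mem_adjoin_of_commute (hρ : Function.Surjective ρ)
    (hker : RingHom.ker ρ ≤ Ideal.jacobson ⊥) (hp : p.Monic) (hirr : Irreducible (p.map ρ))
    (hn : Fintype.card n = p.natDegree) {N y : Matrix n n R} (hN : aeval N p = 0)
    (hy : Commute y N) : y ∈ Algebra.adjoin R {N} := by
  obtain ⟨r, hr, Φ, hΦ⟩ := exists_linearEquiv_adjoinRoot_pi hρ hker hp hirr N hN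
  obtain rfl : r = 1 := Nat.eq_of_mul_eq_mul_right
    (hp.natDegree_map ρ ▸ hirr.natDegree_pos) (by rw [hr, hn, one_mul])
  set ψ := liftₐ p N hN
  have hΦ1 : ∀ c, Φ c = ψ (c 0) *ᵥ Φ 1 := fun c => by
    rw [← hΦ]
    exact congrArg Φ (funext fun i => by
      rw [Subsingleton.elim i 0, Pi.smul_apply, Pi.one_apply, smul_eq_mul, mul_one])
  set a := Φ.symm (y *ᵥ Φ 1) 0
  suffices y = ψ a from this ▸ liftₐ_mem_adjoin p N hN a
  rw [Matrix.ext_iff_mulVec]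
  intro w
  obtain ⟨c, rfl⟩ := Φ.surjective w
  have hyc : Commute y (ψ (c 0)) :=
    Algebra.commute_of_mem_adjoin_singleton_of_commute (liftₐ_mem_adjoin p N hN _) hy
  calc y *ᵥ Φ c = y *ᵥ (ψ (c 0) *ᵥ Φ 1) := by rw [hΦ1]
    _ = ψ (c 0) *ᵥ (y *ᵥ Φ 1) := by rw [Matrix.mulVec_mulVec, hyc.eq, ← Matrix.mulVec_mulVec]
    _ = ψ (c 0) *ᵥ (ψ a *ᵥ Φ 1) := by rw [← Φ.apply_symm_apply (y *ᵥ Φ 1), hΦ1 (Φ.symm _)]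
    _ = ψ a *ᵥ Φ c := by
      rw [hΦ1 c, Matrix.mulVec_mulVec, Matrix.mulVec_mulVec, ← map_mul, ← map_mul, mul_comm]

end MatrixRoots

section BlockScalar

variable {R : Type*} [CommRing R] (m : Type*) {d : Type*} [Fintype m] [DecidableEq m]
  [Fintype d] [DecidableEq d]

def blockScalar : Matrix d d R →ₐ[R] Matrix (m × d) (m × d) R :=
  (Matrix.compAlgEquiv m d R R : Matrix m m (Matrix d d R) →ₐ[R] _).comp (Matrix.scalarAlgHom m R)

variable {m}

theorem commute_blockScalar_iff {y : Matrix (m × d) (m × d) R} {z : Matrix d d R} :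
    Commute y (blockScalar m z) ↔ ∀ i j, Commute (Matrix.comp m m d d R |>.symm y i j) z := by
  obtain ⟨y, rfl⟩ := (Matrix.compAlgEquiv m d R R).surjective y
  rw [Matrix.compAlgEquiv_apply, Equiv.symm_apply_apply]
  change Commute (Matrix.compAlgEquiv m d R R y) _ ↔ _
  rw [blockScalar, AlgHom.comp_apply, AlgEquiv.coe_toAlgHom,
    commute_map_iff (EquivLike.injective _), Commute.symm_iff, Matrix.scalarAlgHom_apply,
    Matrix.scalar_commute_iff, ← Matrix.ext_iff]
  simp only [Matrix.smul_apply, smul_eq_mul, MulOpposite.smul_eq_mul_unop, MulOpposite.unop_op]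
  exact forall₂_congr fun i j => eq_comm

end BlockScalar

theorem commute_blockScalar_iff_mem_adjoin {R F : Type*} [CommRing R] [Field F] {ρ : R →+* F}
    {p : R[X]} {m d : Type*} [Fintype m] [DecidableEq m] [Fintype d] [DecidableEq d]
    (hρ : Function.Surjective ρ) (hker : RingHom.ker ρ ≤ Ideal.jacobson ⊥) (hp : p.Monic)
    (hirr : Irreducible (p.map ρ)) (hd : Fintype.card d = p.natDegree) {z : Matrix d d R}
    (hz : aeval z p = 0) {y : Matrix (m × d) (m × d) R} :
    Commute y (blockScalar m z) ↔
      ∀ i j, (Matrix.comp m m d d R).symm y i j ∈ Algebra.adjoin R {z} := by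
  rw [commute_blockScalar_iff]
  exact forall₂_congr fun i j => ⟨mem_adjoin_of_commute hρ hker hp hirr hd hz,
    fun h => (Algebra.commute_of_mem_adjoin_singleton_of_commute h (Commute.refl z)).symm⟩

theorem ker_factor_span_pow_le_nilradical {o : Type*} [CommRing o] {π : o} {ℓ : ℕ}
    (hle : Ideal.span {π ^ ℓ} ≤ Ideal.span {π}) :
    RingHom.ker (Ideal.Quotient.factor hle) ≤ nilradical (o ⧸ Ideal.span {π ^ ℓ}) := by
  intro z hz
  obtain ⟨y, rfl⟩ := Ideal.Quotient.mk_surjective z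
  rw [RingHom.mem_ker, Ideal.Quotient.factor_mk, Ideal.Quotient.eq_zero_iff_mem,
    Ideal.mem_span_singleton'] at hz
  obtain ⟨c, rfl⟩ := hz
  refine mem_nilradical.mpr ⟨ℓ, ?_⟩
  rw [← map_pow, Ideal.Quotient.eq_zero_iff_mem, mul_pow]
  exact Ideal.mul_mem_left _ _ (Ideal.subset_span rfl)

theorem finite_quotient_span_of_irreducible {o : Type*} [CommRing o] [IsDomain o]
    [IsDiscreteValuationRing o] [Finite (IsLocalRing.ResidueField o)] {π : o}
    (hπ : Irreducible π) : Finite (o ⧸ Ideal.span {π}) :=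
  have : Finite (o ⧸ IsLocalRing.maximalIdeal o) := ‹Finite (IsLocalRing.ResidueField o)›
  .of_equiv _ (Ideal.quotEquivOfEq hπ.maximalIdeal_eq).toEquiv

theorem stmt13_general (o : Type*) [CommRing o] [IsDomain o] [IsDiscreteValuationRing o]
    [Finite (IsLocalRing.ResidueField o)]
    (π : o) (hπ : Irreducible π) (ℓ d m : ℕ)
    (hle : Ideal.span {π ^ ℓ} ≤ Ideal.span {π})
    (f : Polynomial o) (hmonic : f.Monic) (hd : f.natDegree = d)
    (hfbar : Irreducible (f.map (Ideal.Quotient.mk (Ideal.span {π}))))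
    (x : Matrix (Fin d) (Fin d) o) (hx : Polynomial.aeval x f = 0) :
    let Rℓ := o ⧸ Ideal.span {π ^ ℓ}
    let R1 := o ⧸ Ideal.span ({π} : Set o)
    let red : Rℓ →+* R1 := Ideal.Quotient.factor hle
    let xℓ : Matrix (Fin d) (Fin d) Rℓ := x.map (Ideal.Quotient.mk _)
    let x1 : Matrix (Fin d) (Fin d) R1 := x.map (Ideal.Quotient.mk _)
    let blkℓ : Matrix (Fin m × Fin d) (Fin m × Fin d) Rℓ → Fin m → Fin m →
        Matrix (Fin d) (Fin d) Rℓ := fun M i j => Matrix.of fun a b => M (i, a) (j, b)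
    let blk1 : Matrix (Fin m × Fin d) (Fin m × Fin d) R1 → Fin m → Fin m →
        Matrix (Fin d) (Fin d) R1 := fun M i j => Matrix.of fun a b => M (i, a) (j, b)
    ∀ M : Matrix (Fin m × Fin d) (Fin m × Fin d) Rℓ,
      (∀ i j, blk1 (M.map red) i j ∈ Algebra.adjoin R1 ({x1} : Set (Matrix (Fin d) (Fin d) R1))) →
      (M.map red).charpoly = (f.map (Ideal.Quotient.mk (Ideal.span {π}))) ^ m →
      ∃ (g : (Matrix (Fin m × Fin d) (Fin m × Fin d) Rℓ)ˣ)
        (B : Matrix (Fin m × Fin d) (Fin m × Fin d) Rℓ),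
        (∀ i j, blkℓ B i j ∈ Algebra.adjoin Rℓ ({xℓ} : Set (Matrix (Fin d) (Fin d) Rℓ))) ∧
        ((g : Matrix (Fin m × Fin d) (Fin m × Fin d) Rℓ) * M *
          ((g⁻¹ : (Matrix (Fin m × Fin d) (Fin m × Fin d) Rℓ)ˣ) :
            Matrix (Fin m × Fin d) (Fin m × Fin d) Rℓ) = B) ∧
        (∀ y, B * y = y * B →
          ∀ i j, blkℓ y i j ∈ Algebra.adjoin Rℓ ({xℓ} : Set (Matrix (Fin d) (Fin d) Rℓ))) := by
  intro Rℓ R1 red xℓ x1 blkℓ blk1 M _ hM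
  have : (Ideal.span {π}).IsMaximal := PrincipalIdealRing.isMaximal_of_irreducible hπ
  let : Field R1 := Ideal.Quotient.field _
  have : Finite R1 := finite_quotient_span_of_irreducible hπ
  have hred : Function.Surjective red := Ideal.Quotient.factor_surjective hle
  have hnil : RingHom.ker red ≤ nilradical Rℓ := ker_factor_span_pow_le_nilradical hle
  have hjac : RingHom.ker red ≤ Ideal.jacobson ⊥ :=
    hnil.trans (Ideal.jacobson_bot (R := Rℓ) ▸ nilradical_le_jacobson Rℓ)
  set fℓ := f.map (Ideal.Quotient.mk (Ideal.span {π ^ ℓ}))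
  have hfℓ : fℓ.map red = f.map (Ideal.Quotient.mk _) := by
    rw [Polynomial.map_map, Ideal.Quotient.factor_comp_mk]
  have hirr : Irreducible (fℓ.map red) := hfℓ ▸ hfbar
  have hxℓ : aeval xℓ fℓ = 0 := by rw [← Matrix.map_aeval, hx, Matrix.map_zero _ (map_zero _)]
  obtain ⟨Y, hYM, hY⟩ := exists_mem_adjoin_aeval_eq_zero hred hnil
    (PerfectField.separable_of_irreducible hirr) (by rw [← Matrix.charpoly_map, hM, hfℓ])
    (Matrix.aeval_self_charpoly M)
  let X := blockScalar (Fin m) xℓ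
  obtain ⟨g, hg⟩ := exists_conj_eq_of_aeval_eq_zero hred hjac (hmonic.map _) hirr
    (X := X) (by rw [aeval_algHom_apply, hxℓ, map_zero]) hY
  have hcent : ∀ y, Commute y X → ∀ i j, blkℓ y i j ∈ Algebra.adjoin Rℓ {xℓ} := fun y =>
    (commute_blockScalar_iff_mem_adjoin hred hjac (hmonic.map _) hirr
      (by rw [Fintype.card_fin, ← (hmonic.map _).natDegree_map red, hfℓ, hmonic.natDegree_map, hd])
      hxℓ).mp
  refine ⟨g, _, hcent _ ?_, rfl, fun y hy => hcent y ?_⟩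
  · exact hg ▸ (Commute.refl _).units_conj_of_mem_adjoin g hYM
  · exact hg ▸ (Commute.symm hy).units_conj_of_mem_adjoin g hYM

/-- Let `o` be a complete DVR with finite residue field and uniformizer `π`, and
`O = o[x]` the unramified extension generated by a root `x ∈ Mat_d(o)` of a monic
polynomial `f ∈ o[t]` with irreducible reduction mod `π`.  Write `o_ℓ = o/(π^ℓ)`,
identify `Mat_{md}(o_ℓ)` with matrices indexed by `Fin m × Fin d`, and realise
`Mat_m(O_ℓ)` as the block matrices all of whose `d × d` blocks lie in the subalgebra
of `Mat_d(o_ℓ)` generated by the reduction of `x`.  If `M ∈ Mat_{md}(o_ℓ)` has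
reduction mod `π` lying in `Mat_m(O_1)` with characteristic polynomial `f̄^m`, then
`M` is `GL_{md}(o_ℓ)`-conjugate to a matrix `B ∈ Mat_m(O_ℓ)` whose centralizer in
`Mat_{md}(o_ℓ)` is contained in `Mat_m(O_ℓ)`. -/
theorem stmt13 (o : Type*) [CommRing o] [IsDomain o] [IsDiscreteValuationRing o]
    [IsAdicComplete (IsLocalRing.maximalIdeal o) o]
    [Finite (IsLocalRing.ResidueField o)]
    (π : o) (hπ : Irreducible π) (ℓ d m : ℕ) (hℓ : 1 ≤ ℓ)
    (hle : Ideal.span {π ^ ℓ} ≤ Ideal.span {π})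
    (f : Polynomial o) (hmonic : f.Monic) (hd : f.natDegree = d)
    (hfbar : Irreducible (f.map (Ideal.Quotient.mk (Ideal.span {π}))))
    (x : Matrix (Fin d) (Fin d) o) (hx : Polynomial.aeval x f = 0) :
    let Rℓ := o ⧸ Ideal.span {π ^ ℓ}
    let R1 := o ⧸ Ideal.span ({π} : Set o)
    let red : Rℓ →+* R1 := Ideal.Quotient.factor hle
    let xℓ : Matrix (Fin d) (Fin d) Rℓ := x.map (Ideal.Quotient.mk _)
    let x1 : Matrix (Fin d) (Fin d) R1 := x.map (Ideal.Quotient.mk _)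
    let blkℓ : Matrix (Fin m × Fin d) (Fin m × Fin d) Rℓ → Fin m → Fin m →
        Matrix (Fin d) (Fin d) Rℓ := fun M i j => Matrix.of fun a b => M (i, a) (j, b)
    let blk1 : Matrix (Fin m × Fin d) (Fin m × Fin d) R1 → Fin m → Fin m →
        Matrix (Fin d) (Fin d) R1 := fun M i j => Matrix.of fun a b => M (i, a) (j, b)
    ∀ M : Matrix (Fin m × Fin d) (Fin m × Fin d) Rℓ,
      (∀ i j, blk1 (M.map red) i j ∈ Algebra.adjoin R1 ({x1} : Set (Matrix (Fin d) (Fin d) R1))) →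
      (M.map red).charpoly = (f.map (Ideal.Quotient.mk (Ideal.span {π}))) ^ m →
      ∃ (g : (Matrix (Fin m × Fin d) (Fin m × Fin d) Rℓ)ˣ)
        (B : Matrix (Fin m × Fin d) (Fin m × Fin d) Rℓ),
        (∀ i j, blkℓ B i j ∈ Algebra.adjoin Rℓ ({xℓ} : Set (Matrix (Fin d) (Fin d) Rℓ))) ∧
        ((g : Matrix (Fin m × Fin d) (Fin m × Fin d) Rℓ) * M *
          ((g⁻¹ : (Matrix (Fin m × Fin d) (Fin m × Fin d) Rℓ)ˣ) :
            Matrix (Fin m × Fin d) (Fin m × Fin d) Rℓ) = B) ∧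
        (∀ y, B * y = y * B →
          ∀ i j, blkℓ y i j ∈ Algebra.adjoin Rℓ ({xℓ} : Set (Matrix (Fin d) (Fin d) Rℓ))) :=
  stmt13_general o π hπ ℓ d m hle f hmonic hd hfbar x hx
end

section
/- Let G be a finite group with subgroups U, L, V such that L normalizes U and V and the multiplication map U × L × V → G is injective (a virtual Iwahori decomposition). Let e_U and e_V be the averaging idempotents of U and V in the complex group algebra CG. Then the map e_U e_V CG → e_V e_U CG given by f ↦ e_V f is an isomorphism of CL–CG bimodules. -/
/-!
Left multiplication by `e_H` is the orthogonal projection of `ℓ²(G)` onto the left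
`H`-invariant vectors. For orthogonal projections `P`, `Q` of a finite-dimensional inner
product space, `Q` is injective on `range (P Q)`, since `‖P Q a‖² = ⟪a, Q P Q a⟫`. Hence
`dim range (Q P Q) = dim range (P Q)` and `dim range (P Q P) = dim range (Q P)`, and the
inclusions `range (Q P Q) ⊆ range (Q P)`, `range (P Q P) ⊆ range (P Q)` force
`Q (range (P Q)) = range (Q P)`. The map `z ↦ e_V z` is right `ℂ[G]`-linear, and it commutes
with left multiplication by `L` because `L` normalizes `V`.
-/

open LinearMap

theorem LinearMap.finrank_map_eq_of_disjoint_ker {K V W : Type*} [DivisionRing K]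
    [AddCommGroup V] [Module K V] [AddCommGroup W] [Module K W] {f : V →ₗ[K] W}
    {p : Submodule K V} (h : Disjoint p (ker f)) :
    Module.finrank K (p.map f) = Module.finrank K p := by
  rw [← range_domRestrict]
  exact finrank_range_of_inj (injective_domRestrict_iff.2 h)

namespace LinearMap.IsSymmetricProjection

open scoped InnerProductSpace

variable {𝕜 E : Type*} [RCLike 𝕜] [NormedAddCommGroup E] [InnerProductSpace 𝕜 E]
  {P Q : E →ₗ[𝕜] E}

theorem disjoint_range_comp_ker (hP : P.IsSymmetricProjection) (hQ : Q.IsSymmetric) :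
    Disjoint (range (P ∘ₗ Q)) (ker Q) := by
  rw [Submodule.disjoint_def]
  rintro _ ⟨a, rfl⟩ hQPQa
  rw [comp_apply, mem_ker] at *
  rw [← inner_self_eq_zero (𝕜 := 𝕜)]
  calc ⟪P (Q a), P (Q a)⟫_𝕜 = ⟪Q a, P (P (Q a))⟫_𝕜 := hP.isSymmetric _ _
    _ = ⟪a, Q (P (Q a))⟫_𝕜 := by
      rw [← Module.End.mul_apply, hP.isIdempotentElem.eq, hQ]
    _ = 0 := by rw [hQPQa, inner_zero_right]

theorem finrank_range_comp_comp (hP : P.IsSymmetricProjection) (hQ : Q.IsSymmetric) :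
    Module.finrank 𝕜 (range (Q ∘ₗ P ∘ₗ Q)) = Module.finrank 𝕜 (range (P ∘ₗ Q)) := by
  rw [range_comp]
  exact finrank_map_eq_of_disjoint_ker (hP.disjoint_range_comp_ker hQ)

variable [FiniteDimensional 𝕜 E]

theorem range_comp_comp (hP : P.IsSymmetricProjection) (hQ : Q.IsSymmetricProjection) :
    range (Q ∘ₗ P ∘ₗ Q) = range (Q ∘ₗ P) := by
  have hQPQ : range (Q ∘ₗ P ∘ₗ Q) ≤ range (Q ∘ₗ P) := by
    rw [← comp_assoc]; exact range_comp_le_range _ _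
  have hPQP : range (P ∘ₗ Q ∘ₗ P) ≤ range (P ∘ₗ Q) := by
    rw [← comp_assoc]; exact range_comp_le_range _ _
  refine Submodule.eq_of_le_of_finrank_le hQPQ ?_
  rw [finrank_range_comp_comp hP hQ.isSymmetric, ← finrank_range_comp_comp hQ hP.isSymmetric]
  exact Submodule.finrank_mono hPQP

theorem bijOn_range_comp (hP : P.IsSymmetricProjection) (hQ : Q.IsSymmetricProjection) :
    Set.BijOn Q (range (P ∘ₗ Q)) (range (Q ∘ₗ P)) := by
  have hinj : Set.InjOn Q (range (P ∘ₗ Q)) :=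
    injOn_of_disjoint_ker le_rfl (hP.disjoint_range_comp_ker hQ.isSymmetric)
  convert hinj.bijOn_image
  rw [← Submodule.map_coe, ← range_comp, range_comp_comp hP hQ]

end LinearMap.IsSymmetricProjection

namespace MonoidAlgebra

theorem coeff_of_mul {R G : Type*} [Semiring R] [Group G] (h : G) (f : MonoidAlgebra R G) :
    ⇑(of R G h * f).coeff = f.coeff ∘ (Equiv.mulLeft h).symm := by
  ext; simp

variable {G : Type*} [Fintype G]

noncomputable def toL2 : MonoidAlgebra ℂ G ≃ₗ[ℂ] EuclideanSpace ℂ G :=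
  (coeffLinearEquiv ℂ).trans
    ((Finsupp.linearEquivFunOnFinite ℂ ℂ G).trans (WithLp.linearEquiv 2 ℂ (G → ℂ)).symm)

noncomputable abbrev normedAddCommGroupL2 : NormedAddCommGroup (MonoidAlgebra ℂ G) :=
  NormedAddCommGroup.induced _ _ toL2 toL2.injective

attribute [local instance] normedAddCommGroupL2

noncomputable abbrev innerProductSpaceL2 : InnerProductSpace ℂ (MonoidAlgebra ℂ G) :=
  InnerProductSpace.induced toL2

attribute [local instance] innerProductSpaceL2

open scoped InnerProductSpace

theorem inner_def (f g : MonoidAlgebra ℂ G) : ⟪f, g⟫_ℂ = g.coeff ⬝ᵥ star ⇑f.coeff := rfl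

variable [Group G]

theorem inner_of_mul_left (h : G) (f g : MonoidAlgebra ℂ G) :
    ⟪of ℂ G h * f, g⟫_ℂ = ⟪f, of ℂ G h⁻¹ * g⟫_ℂ := by
  rw [inner_def, inner_def, coeff_of_mul, coeff_of_mul]
  refine (dotProduct_comp_equiv_symm g.coeff (star ⇑f.coeff) (Equiv.mulLeft h)).trans ?_
  congr 1; ext; simp

open scoped Classical

noncomputable def average (H : Subgroup G) : MonoidAlgebra ℂ G :=
  (Nat.card H : ℂ)⁻¹ • ∑ h : H, of ℂ G h

theorem average_eq_sum_ite (H : Subgroup G) : average H =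
    (Nat.card H : ℂ)⁻¹ • ∑ g : G, if g ∈ H then of ℂ G g else 0 := by
  rw [average, ← Finset.sum_filter]
  exact congrArg _ (Finset.sum_subtype _ (fun _ => by simp) _).symm

theorem of_mul_average {H : Subgroup G} {h : G} (hh : h ∈ H) :
    of ℂ G h * average H = average H := by
  rw [average, mul_smul_comm, Finset.mul_sum]
  congr 1
  exact Fintype.sum_equiv (Equiv.mulLeft (⟨h, hh⟩ : H)) _ _ fun _ => (map_mul _ _ _).symm

theorem isIdempotentElem_average (H : Subgroup G) : IsIdempotentElem (average H) := by
  unfold IsIdempotentElem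
  nth_rewrite 1 [average]
  rw [smul_mul_assoc, Finset.sum_mul]
  simp only [of_mul_average (Subtype.prop _), Finset.sum_const, Finset.card_univ,
    ← Nat.card_eq_fintype_card]
  rw [← Nat.cast_smul_eq_nsmul ℂ, smul_smul, inv_mul_cancel₀ (mod_cast Nat.card_pos.ne'),
    one_smul]

theorem inner_average_mul_left (H : Subgroup G) (f g : MonoidAlgebra ℂ G) :
    ⟪average H * f, g⟫_ℂ = ⟪f, average H * g⟫_ℂ := by
  simp only [average, smul_mul_assoc, Finset.sum_mul, inner_smul_left, inner_smul_right,
    sum_inner, inner_sum, inner_of_mul_left, map_inv₀, Complex.conj_natCast]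
  congr 1
  exact Fintype.sum_equiv (Equiv.inv H) _ _ fun _ => rfl

theorem isSymmetricProjection_mulLeft_average (H : Subgroup G) :
    (mulLeft ℂ (average H)).IsSymmetricProjection where
  isIdempotentElem := by
    rw [IsIdempotentElem, Module.End.mul_eq_comp, ← mulLeft_mul, isIdempotentElem_average H]
  isSymmetric := inner_average_mul_left H

theorem commute_of_average {H : Subgroup G} {l : G}
    (hl : l ∈ Subgroup.normalizer (H : Set G)) : Commute (of ℂ G l) (average H) := by
  rw [Commute, SemiconjBy, average, mul_smul_comm, smul_mul_assoc, Finset.mul_sum,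
    Finset.sum_mul]
  congr 1
  refine Fintype.sum_equiv ((MulAut.conj l).toEquiv.subtypeEquiv
    fun h => Subgroup.mem_normalizer_iff.1 hl h) _ _ fun h => ?_
  simp

theorem bijOn_average_mul (U V : Subgroup G) :
    Set.BijOn (average V * ·) (Set.range (average U * average V * ·))
      (Set.range (average V * average U * ·)) := by
  have := (isSymmetricProjection_mulLeft_average U).bijOn_range_comp
    (isSymmetricProjection_mulLeft_average V)
  rwa [← mulLeft_mul, ← mulLeft_mul, coe_range, coe_range] at this

end MonoidAlgebra

open scoped Classical in
theorem stmt15_general (G : Type*) [Group G] [Fintype G] (U L V : Subgroup G)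
    (hLV : ∀ l ∈ L, ∀ v ∈ V, l * v * l⁻¹ ∈ V) :
    let A := MonoidAlgebra ℂ G
    let e : Subgroup G → A := fun H =>
      (Nat.card H : ℂ)⁻¹ • ∑ g : G, if g ∈ H then MonoidAlgebra.of ℂ G g else 0
    let S1 : Set A := {z | ∃ a : A, z = e U * e V * a}
    let S2 : Set A := {z | ∃ a : A, z = e V * e U * a}
    let φ : A → A := fun z => e V * z
    Set.BijOn φ S1 S2 ∧
      (∀ z ∈ S1, ∀ z' ∈ S1, φ (z + z') = φ z + φ z') ∧
      (∀ z ∈ S1, ∀ c : ℂ, φ (c • z) = c • φ z) ∧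
      (∀ z ∈ S1, ∀ l ∈ L, φ (MonoidAlgebra.of ℂ G l * z) =
        MonoidAlgebra.of ℂ G l * φ z) ∧
      (∀ z ∈ S1, ∀ a : A, φ (z * a) = φ z * a) := by
  intro A e S1 S2 φ
  have he : e = MonoidAlgebra.average :=
    funext fun H => (MonoidAlgebra.average_eq_sum_ite H).symm
  have hS : ∀ x : A, {z | ∃ a : A, z = x * a} = Set.range (x * ·) :=
    fun x => Set.ext fun _ => exists_congr fun _ => eq_comm
  have hL : L ≤ Subgroup.normalizer (V : Set G) := fun l hl =>
    Subgroup.mem_normalizer_iff.2 fun v =>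
      ⟨hLV l hl v, fun h => by simpa [mul_assoc] using hLV l⁻¹ (inv_mem hl) _ h⟩
  simp only [S1, S2, φ, he, hS]
  exact ⟨MonoidAlgebra.bijOn_average_mul U V, fun _ _ _ _ => mul_add ..,
    fun _ _ _ => mul_smul_comm .., fun z _ _ hl =>
      ((MonoidAlgebra.commute_of_average (hL hl)).left_comm z).symm,
    fun _ _ _ => (mul_assoc ..).symm⟩

open scoped Classical in
/-- Let `G` be a finite group with a virtual Iwahori decomposition `(U, L, V)`
(`L` normalizes `U` and `V`, and multiplication `U × L × V → G` is injective).
With `e_U`, `e_V` the averaging idempotents in `ℂ[G]`, the map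
`e_U e_V ℂ[G] → e_V e_U ℂ[G]`, `z ↦ e_V * z`, is an isomorphism of
`ℂ[L]`–`ℂ[G]` bimodules. -/
theorem stmt15 (G : Type*) [Group G] [Fintype G] (U L V : Subgroup G)
    (hLU : ∀ l ∈ L, ∀ u ∈ U, l * u * l⁻¹ ∈ U)
    (hLV : ∀ l ∈ L, ∀ v ∈ V, l * v * l⁻¹ ∈ V)
    (hinj : Function.Injective
      (fun p : U × L × V => (p.1 : G) * (p.2.1 : G) * (p.2.2 : G))) :
    let A := MonoidAlgebra ℂ G
    let e : Subgroup G → A := fun H =>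
      (Nat.card H : ℂ)⁻¹ • ∑ g : G, if g ∈ H then MonoidAlgebra.of ℂ G g else 0
    let S1 : Set A := {z | ∃ a : A, z = e U * e V * a}
    let S2 : Set A := {z | ∃ a : A, z = e V * e U * a}
    let φ : A → A := fun z => e V * z
    Set.BijOn φ S1 S2 ∧
      (∀ z ∈ S1, ∀ z' ∈ S1, φ (z + z') = φ z + φ z') ∧
      (∀ z ∈ S1, ∀ c : ℂ, φ (c • z) = c • φ z) ∧
      (∀ z ∈ S1, ∀ l ∈ L, φ (MonoidAlgebra.of ℂ G l * z) =
        MonoidAlgebra.of ℂ G l * φ z) ∧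
      (∀ z ∈ S1, ∀ a : A, φ (z * a) = φ z * a) :=
  stmt15_general G U L V hLV
end

section
/- Let G be a finite group with subgroups L, V′ ⊆ V, U′ ⊆ U such that (U, L, V) is a virtual Iwahori decomposition and L normalizes U′. Let Y be an irreducible complex representation of G. Assume: (1) L′ := [V′,U] ⊆ L acts on Y by a linear character ψ; (2) V′ and U centralize L′; (3) U′ = ∩_{v∈V′} Ker(ψ_v), where ψ_v(u) = ψ(uvu^{-1}v^{-1}); (4) U is abelian and the map V′ → (U/U′)^∨, v ↦ ψ_v, is surjective. Then e_V e_U Y = e_V e_{U′} Y as subspaces of Y. -/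
/-!
Write `S_H = ∑_{h ∈ H} ρ h`, so that `e_H = |H|⁻¹ S_H`. Since `U′ ≤ U`, `S_{U′} S_U = |U′| S_U`,
which gives `e_V e_U Y ⊆ e_V e_{U′} Y`. Conversely, for `v ∈ V′` and `u ∈ U` we have
`v u v⁻¹ = [v, u] u` with `[v, u] ∈ L′`, so `ρ v S_U ρ v⁻¹ = ∑_{u ∈ U} ψ [v, u] ρ u`. As `V′`
centralizes `L′`, `v ↦ ψ [v, u]` is a character of `V′`, trivial exactly when `u ∈ U′`, and
orthogonality of characters gives `∑_{v ∈ V′} ρ v S_U ρ v⁻¹ = |V′| S_{U′}`. Since `S_V ρ v = S_V`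
for `v ∈ V′ ≤ V`, this shows `e_V e_{U′} Y ⊆ e_V e_U Y`.
-/

open Finset

namespace Representation

section Sum

open scoped Classical

variable {k G W : Type*} [CommRing k] [Group G] [Fintype G] [AddCommGroup W] [Module k W]
  (ρ : Representation k G W)

noncomputable def subgroupSum (H : Subgroup G) : Module.End k W :=
  ∑ g : G, if g ∈ H then ρ g else 0

theorem mul_subgroupSum_of_mem {H : Subgroup G} {a : G} (ha : a ∈ H) :
    ρ a * ρ.subgroupSum H = ρ.subgroupSum H := by
  rw [subgroupSum, mul_sum]
  refine Fintype.sum_equiv (Equiv.mulLeft a) _ _ fun g => ?_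
  by_cases hg : g ∈ H <;> simp [hg, mul_mem_cancel_left ha]

theorem subgroupSum_mul_of_mem {H : Subgroup G} {a : G} (ha : a ∈ H) :
    ρ.subgroupSum H * ρ a = ρ.subgroupSum H := by
  rw [subgroupSum, sum_mul]
  refine Fintype.sum_equiv (Equiv.mulRight a) _ _ fun g => ?_
  by_cases hg : g ∈ H <;> simp [hg, mul_mem_cancel_right ha]

theorem subgroupSum_mul_subgroupSum_of_le {H' H : Subgroup G} (h : H' ≤ H) :
    ρ.subgroupSum H' * ρ.subgroupSum H = (Nat.card H' : k) • ρ.subgroupSum H := by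
  classical
  calc ρ.subgroupSum H' * ρ.subgroupSum H
      = ∑ g : G, if g ∈ H' then ρ.subgroupSum H else 0 := by
        rw [subgroupSum, sum_mul]
        refine sum_congr rfl fun g _ => ?_
        split_ifs with hg
        · exact ρ.mul_subgroupSum_of_mem (h hg)
        · exact zero_mul _
    _ = (Nat.card H' : k) • ρ.subgroupSum H := by
        rw [← sum_filter, sum_const, Nat.card_eq_fintype_card, Fintype.card_subtype,
          Nat.cast_smul_eq_nsmul]

theorem conj_subgroupSum {U : Subgroup G} {v : G} (c : G → k)
    (hconj : ∀ u ∈ U, ρ (v * u * v⁻¹) = c u • ρ u) :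
    ρ v * ρ.subgroupSum U * ρ v⁻¹ = ∑ u : G, if u ∈ U then c u • ρ u else 0 := by
  rw [subgroupSum, mul_sum, sum_mul]
  refine sum_congr rfl fun u _ => ?_
  split_ifs with hu
  · rw [← hconj u hu, map_mul, map_mul]
  · simp

theorem sum_conj_subgroupSum {V' U U' : Subgroup G} (c : G → G → k)
    (hconj : ∀ v ∈ V', ∀ u ∈ U, ρ (v * u * v⁻¹) = c v u • ρ u)
    (horth : ∀ u ∈ U, (∑ v : G, if v ∈ V' then c v u else 0) =
      if u ∈ U' then (Nat.card V' : k) else 0)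
    (hU' : U' ≤ U) :
    (∑ v : G, if v ∈ V' then ρ v * ρ.subgroupSum U * ρ v⁻¹ else 0) =
      (Nat.card V' : k) • ρ.subgroupSum U' := by
  calc (∑ v : G, if v ∈ V' then ρ v * ρ.subgroupSum U * ρ v⁻¹ else 0)
      = ∑ v : G, ∑ u : G, if v ∈ V' then (if u ∈ U then c v u • ρ u else 0) else 0 := by
        refine sum_congr rfl fun v _ => ?_
        split_ifs with hv
        · exact ρ.conj_subgroupSum (c v) (hconj v hv)
        · simp
    _ = ∑ u : G, if u ∈ U then (∑ v : G, if v ∈ V' then c v u else 0) • ρ u else 0 := by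
        rw [sum_comm]
        refine sum_congr rfl fun u _ => ?_
        split_ifs with hu
        · rw [sum_smul]
          exact sum_congr rfl fun v _ => by split_ifs <;> simp
        · simp
    _ = (Nat.card V' : k) • ρ.subgroupSum U' := by
        rw [subgroupSum, smul_sum]
        refine sum_congr rfl fun u _ => ?_
        by_cases hu : u ∈ U
        · rw [if_pos hu, horth u hu]
          split_ifs <;> simp
        · have hu' : u ∉ U' := fun h => hu (hU' h)
          simp [hu, hu']

end Sum

section Range

open scoped Classical

variable {k G W : Type*} [Field k] [CharZero k] [Group G] [Fintype G] [AddCommGroup W]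
  [Module k W] (ρ : Representation k G W)

theorem range_subgroupSum_mul_subgroupSum_eq {V V' U U' : Subgroup G} (hV' : V' ≤ V)
    (hU' : U' ≤ U)
    (havg : (∑ v : G, if v ∈ V' then ρ v * ρ.subgroupSum U * ρ v⁻¹ else 0) =
      (Nat.card V' : k) • ρ.subgroupSum U') :
    LinearMap.range (ρ.subgroupSum V * ρ.subgroupSum U) =
      LinearMap.range (ρ.subgroupSum V * ρ.subgroupSum U') := by
  have hcard : ∀ H : Subgroup G, (Nat.card H : k) ≠ 0 := fun H => by simp
  apply le_antisymm
  · calc LinearMap.range (ρ.subgroupSum V * ρ.subgroupSum U)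
        = LinearMap.range ((Nat.card U' : k) • (ρ.subgroupSum V * ρ.subgroupSum U)) :=
          (LinearMap.range_smul _ _ (hcard U')).symm
      _ = LinearMap.range (ρ.subgroupSum V * ρ.subgroupSum U' * ρ.subgroupSum U) := by
          rw [mul_assoc, ρ.subgroupSum_mul_subgroupSum_of_le hU', mul_smul_comm]
      _ ≤ LinearMap.range (ρ.subgroupSum V * ρ.subgroupSum U') :=
          LinearMap.range_comp_le_range _ _
  · have hfactor : (Nat.card V' : k) • (ρ.subgroupSum V * ρ.subgroupSum U') =
        ρ.subgroupSum V * ρ.subgroupSum U * ∑ v : G, if v ∈ V' then ρ v⁻¹ else 0 := by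
      rw [← mul_smul_comm, ← havg, mul_sum, mul_sum]
      refine sum_congr rfl fun v _ => ?_
      split_ifs with hv
      · rw [← mul_assoc, ← mul_assoc, ρ.subgroupSum_mul_of_mem (hV' hv)]
      · simp
    calc LinearMap.range (ρ.subgroupSum V * ρ.subgroupSum U')
        = LinearMap.range ((Nat.card V' : k) • (ρ.subgroupSum V * ρ.subgroupSum U')) :=
          (LinearMap.range_smul _ _ (hcard V')).symm
      _ ≤ LinearMap.range (ρ.subgroupSum V * ρ.subgroupSum U) := by
          rw [hfactor]
          exact LinearMap.range_comp_le_range _ _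

theorem range_smul_subgroupSum_comp (V U : Subgroup G) :
    LinearMap.range (((Nat.card V : k)⁻¹ • ρ.subgroupSum V) ∘ₗ
      ((Nat.card U : k)⁻¹ • ρ.subgroupSum U)) =
      LinearMap.range (ρ.subgroupSum V * ρ.subgroupSum U) := by
  rw [LinearMap.smul_comp, LinearMap.comp_smul, smul_smul, LinearMap.range_smul]
  · rfl
  · simp

end Range

end Representation

section CommutatorCharacter

open scoped commutatorElement

variable {G k : Type*} [Group G] [Field k] (ψ : G → k) {V U : Subgroup G}

/-- The inverse of the paper's character `v ↦ ψ_v(u)` of `V`. -/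
def commutatorCharacter (hone : ψ 1 = 1)
    (hmul : ∀ a ∈ ⁅V, U⁆, ∀ b ∈ ⁅V, U⁆, ψ (a * b) = ψ a * ψ b)
    (hcent : ∀ v ∈ V, ∀ h ∈ ⁅V, U⁆, v * h = h * v) {u : G} (hu : u ∈ U) :
    V →* k where
  toFun v := ψ ⁅(v : G), u⁆
  map_one' := by simpa using hone
  map_mul' a b := by
    have hb := Subgroup.commutator_mem_commutator b.2 hu
    rw [Subgroup.coe_mul, commutatorElement_mul_left_eq_conj_mul, hcent a a.2 _ hb,
      mul_inv_cancel_right, hmul _ hb _ (Subgroup.commutator_mem_commutator a.2 hu), mul_comm]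

@[simp]
theorem commutatorCharacter_apply (hone : ψ 1 = 1)
    (hmul : ∀ a ∈ ⁅V, U⁆, ∀ b ∈ ⁅V, U⁆, ψ (a * b) = ψ a * ψ b)
    (hcent : ∀ v ∈ V, ∀ h ∈ ⁅V, U⁆, v * h = h * v) {u : G} (hu : u ∈ U) (v : V) :
    commutatorCharacter ψ hone hmul hcent hu v = ψ ⁅(v : G), u⁆ :=
  rfl

theorem commutatorCharacter_eq_one_iff (hone : ψ 1 = 1)
    (hmul : ∀ a ∈ ⁅V, U⁆, ∀ b ∈ ⁅V, U⁆, ψ (a * b) = ψ a * ψ b)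
    (hcent : ∀ v ∈ V, ∀ h ∈ ⁅V, U⁆, v * h = h * v) {u : G} (hu : u ∈ U) :
    commutatorCharacter ψ hone hmul hcent hu = 1 ↔ ∀ v ∈ V, ψ ⁅u, v⁆ = 1 := by
  rw [DFunLike.ext_iff, Subtype.forall]
  refine forall₂_congr fun v hv => ?_
  have hvu := Subgroup.commutator_mem_commutator hv hu
  have hinv : ψ ⁅u, v⁆ * ψ ⁅v, u⁆ = 1 := by
    rw [← commutatorElement_inv, ← hmul _ (inv_mem hvu) _ hvu, inv_mul_cancel, hone]
  rw [commutatorCharacter_apply, MonoidHom.one_apply, eq_inv_of_mul_eq_one_right hinv, inv_eq_one]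

open scoped Classical in
theorem sum_commutator_eq [Fintype G] (hone : ψ 1 = 1)
    (hmul : ∀ a ∈ ⁅V, U⁆, ∀ b ∈ ⁅V, U⁆, ψ (a * b) = ψ a * ψ b)
    (hcent : ∀ v ∈ V, ∀ h ∈ ⁅V, U⁆, v * h = h * v) {u : G} (hu : u ∈ U) :
    (∑ v : G, if v ∈ V then ψ ⁅v, u⁆ else 0) =
      if ∀ v ∈ V, ψ ⁅u, v⁆ = 1 then (Nat.card V : k) else 0 := by
  rw [← sum_filter, sum_subtype (p := (· ∈ V)) _ (by simp) fun v => ψ ⁅v, u⁆]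
  have := sum_hom_units (commutatorCharacter ψ hone hmul hcent hu)
  simp only [commutatorCharacter_apply, commutatorCharacter_eq_one_iff] at this
  rw [this, Nat.card_eq_fintype_card, Nat.cast_ite, Nat.cast_zero]

end CommutatorCharacter

open scoped Classical in
theorem stmt16_general (G W : Type*) [Group G] [Fintype G]
    [AddCommGroup W] [Module ℂ W]
    (ρ : Representation ℂ G W)
    (U V V' U' L' : Subgroup G)
    (hV'V : V' ≤ V) (hU'U : U' ≤ U)
    (hL'def : L' = ⁅V', U⁆)
    (ψ : G → ℂ)
    (hψmul : ∀ a ∈ L', ∀ b ∈ L', ψ (a * b) = ψ a * ψ b)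
    -- (1) `L′` acts on `Y` by the linear character `ψ`
    (hact : ∀ h ∈ L', ∀ w : W, ρ h w = ψ h • w)
    -- (2) `V′` and `U` centralize `L′`
    (hcentV : ∀ v ∈ V', ∀ h ∈ L', v * h = h * v)
    -- (3) `U′ = ∩_{v ∈ V′} Ker ψ_v` where `ψ_v(u) = ψ([u, v])`
    (hU'ker : ∀ u : G, u ∈ U' ↔ u ∈ U ∧ ∀ v ∈ V', ψ (u * v * u⁻¹ * v⁻¹) = 1) :
    let e : Subgroup G → (W →ₗ[ℂ] W) := fun H =>
      (Nat.card H : ℂ)⁻¹ • ∑ g : G, if g ∈ H then (ρ g : W →ₗ[ℂ] W) else 0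
    LinearMap.range (e V ∘ₗ e U) = LinearMap.range (e V ∘ₗ e U') := by
  intro e
  subst hL'def
  have hone : ψ 1 = 1 := by simpa using ((hU'ker 1).1 (one_mem _)).2 1 (one_mem _)
  open scoped commutatorElement in
  have hconj : ∀ v ∈ V', ∀ u ∈ U, ρ (v * u * v⁻¹) = ψ ⁅v, u⁆ • ρ u := by
    intro v hv u hu
    have hvuv : v * u * v⁻¹ = ⁅v, u⁆ * u := by rw [commutatorElement_def, inv_mul_cancel_right]
    ext w
    rw [hvuv, map_mul, Module.End.mul_apply, hact _ (Subgroup.commutator_mem_commutator hv hu),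
      LinearMap.smul_apply]
  open scoped commutatorElement in
  have horth : ∀ u ∈ U, (∑ v : G, if v ∈ V' then ψ ⁅v, u⁆ else 0) =
      if u ∈ U' then (Nat.card V' : ℂ) else 0 := fun u hu => by
    rw [sum_commutator_eq ψ hone hψmul hcentV hu]
    simp only [hU'ker, hu, true_and, commutatorElement_def]
  change LinearMap.range (((Nat.card V : ℂ)⁻¹ • ρ.subgroupSum V) ∘ₗ
      ((Nat.card U : ℂ)⁻¹ • ρ.subgroupSum U)) = LinearMap.range
      (((Nat.card V : ℂ)⁻¹ • ρ.subgroupSum V) ∘ₗ ((Nat.card U' : ℂ)⁻¹ • ρ.subgroupSum U'))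
  rw [ρ.range_smul_subgroupSum_comp, ρ.range_smul_subgroupSum_comp]
  exact ρ.range_subgroupSum_mul_subgroupSum_eq hV'V hU'U
    (ρ.sum_conj_subgroupSum _ hconj horth hU'U)

open scoped Classical in
/-- The idempotent-reduction lemma: under hypotheses (1)–(4) on the virtual Iwahori
decomposition `(U, L, V)`, subgroups `V′ ≤ V`, `U′ ≤ U`, the subgroup
`L′ = [V′, U] ≤ L` acting by a linear character `ψ` on the irreducible
representation `Y`, one has `e_V e_U Y = e_V e_{U′} Y`. -/
theorem stmt16 (G W : Type*) [Group G] [Fintype G]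
    [AddCommGroup W] [Module ℂ W] [Nontrivial W]
    (ρ : Representation ℂ G W)
    (hirr : ∀ p : Submodule ℂ W, (∀ g : G, ∀ w ∈ p, ρ g w ∈ p) → p = ⊥ ∨ p = ⊤)
    (U L V V' U' L' : Subgroup G)
    (hV'V : V' ≤ V) (hU'U : U' ≤ U)
    (hLU : ∀ l ∈ L, ∀ u ∈ U, l * u * l⁻¹ ∈ U)
    (hLV : ∀ l ∈ L, ∀ v ∈ V, l * v * l⁻¹ ∈ V)
    (hLU' : ∀ l ∈ L, ∀ u ∈ U', l * u * l⁻¹ ∈ U')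
    (hinj : Function.Injective
      (fun p : U × L × V => (p.1 : G) * (p.2.1 : G) * (p.2.2 : G)))
    (hL'def : L' = ⁅V', U⁆) (hL'L : L' ≤ L)
    (ψ : G → ℂ)
    (hψmul : ∀ a ∈ L', ∀ b ∈ L', ψ (a * b) = ψ a * ψ b)
    -- (1) `L′` acts on `Y` by the linear character `ψ`
    (hact : ∀ h ∈ L', ∀ w : W, ρ h w = ψ h • w)
    -- (2) `V′` and `U` centralize `L′`
    (hcentV : ∀ v ∈ V', ∀ h ∈ L', v * h = h * v)
    (hcentU : ∀ u ∈ U, ∀ h ∈ L', u * h = h * u)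
    -- (3) `U′ = ∩_{v ∈ V′} Ker ψ_v` where `ψ_v(u) = ψ([u, v])`
    (hU'ker : ∀ u : G, u ∈ U' ↔ u ∈ U ∧ ∀ v ∈ V', ψ (u * v * u⁻¹ * v⁻¹) = 1)
    -- (4) `U` is abelian and `v ↦ ψ_v` surjects onto the character group of `U/U′`
    (hUab : ∀ a ∈ U, ∀ b ∈ U, a * b = b * a)
    (hsurj : ∀ χ : G → ℂ, (∀ a ∈ U, ∀ b ∈ U, χ (a * b) = χ a * χ b) →
      (∀ u ∈ U', χ u = 1) → (∀ u ∈ U, χ u ≠ 0) →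
      ∃ v ∈ V', ∀ u ∈ U, χ u = ψ (u * v * u⁻¹ * v⁻¹)) :
    let e : Subgroup G → (W →ₗ[ℂ] W) := fun H =>
      (Nat.card H : ℂ)⁻¹ • ∑ g : G, if g ∈ H then (ρ g : W →ₗ[ℂ] W) else 0
    LinearMap.range (e V ∘ₗ e U) = LinearMap.range (e V ∘ₗ e U') :=
  stmt16_general G W ρ U V V' U' L' hV'V hU'U hL'def ψ hψmul hact hcentV hU'ker
end

section
/- Let N be a finite abelian group and β a 2-cocycle on N with values in C^× such that the twisted group algebra C^β N is a central simple algebra (β nondegenerate). Suppose N = N_E × N_O and the alternating form ⟨h1,h2⟩_β = β(h1,h2)/β(h2,h1) is trivial on N_E × N_O. Then the multiplication map C^β N_E ⊗ C^β N_O → C^β N is an isomorphism of algebras. -/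
/-!
Put `σ(n) = β((n₁,1),(1,n₂))`. Applying the cocycle identity to the triples of
elements of `N_E × 1` and `1 × N_O`, and using that `(h₁,1)` and `(1,h₂)` commute under
`⟨,⟩_β`, one finds that `β` differs from the product cocycle
`β_E(h₁,k₁) β_O(h₂,k₂)` by the coboundary of `σ`. Rescaling basis vectors by a
coboundary is an isomorphism of twisted group algebras, and `Ψ` is exactly this rescaling.
-/

open Finset

/-- The multiplication of the twisted group algebra, written on coefficient functions. -/
def twistedConv {G R : Type*} [Group G] [Fintype G] [CommSemiring R]
    (β : G → G → R) (a b : G → R) (n : G) : R :=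
  ∑ h : G, β h (h⁻¹ * n) * a h * b (h⁻¹ * n)

theorem mul_twistedConv_of_cohomologous {G R : Type*} [Group G] [Fintype G]
    [CommSemiring R] {β β' : G → G → R} (σ : G → R)
    (hσ : ∀ h k, σ (h * k) * β' h k = β h k * σ h * σ k) (a b : G → R) (n : G) :
    σ n * twistedConv β' a b n =
      twistedConv β (fun g => σ g * a g) (fun g => σ g * b g) n := by
  rw [twistedConv, twistedConv, mul_sum]
  refine sum_congr rfl fun h _ => ?_
  have hh := hσ h (h⁻¹ * n)
  rw [mul_inv_cancel_left] at hh
  calc σ n * (β' h (h⁻¹ * n) * a h * b (h⁻¹ * n))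
      = σ n * β' h (h⁻¹ * n) * (a h * b (h⁻¹ * n)) := by ring
    _ = _ := by rw [hh]; ring

/-- On `M × N`, a cocycle for which `(m,1)` and `(1,n)` commute is cohomologous to the
product of its restrictions to `M` and `N`, via `σ(m,n) = β((m,1),(1,n))`. -/
theorem cocycle_prod_eq_mul_coboundary {M N R : Type*} [Monoid M] [Monoid N] [CommRing R]
    (β : M × N → M × N → R)
    (hcocycle : ∀ g h k, β g h * β (g * h) k = β h k * β g (h * k))
    (hcomm : ∀ m n, β (m, 1) (1, n) = β (1, n) (m, 1)) (h k : M × N) :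
    β ((h * k).1, 1) (1, (h * k).2) * (β (h.1, 1) (k.1, 1) * β (1, h.2) (1, k.2)) =
      β h k * β (h.1, 1) (1, h.2) * β (k.1, 1) (1, k.2) := by
  obtain ⟨h₁, h₂⟩ := h
  obtain ⟨k₁, k₂⟩ := k
  have r₁ := hcocycle (h₁, 1) (1, h₂) (k₁, 1)
  have r₂ := hcocycle (h₁, 1) (k₁, 1) (1, h₂)
  have r₃ := hcocycle ((h₁, 1) * (k₁, 1)) (1, h₂) (1, k₂)
  have r₄ := hcocycle ((h₁, 1) * (1, h₂)) (k₁, 1) (1, k₂)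
  have r₅ := hcomm k₁ h₂
  simp only [Prod.mk_mul_mk, mul_one, one_mul] at r₁ r₂ r₃ r₄ ⊢
  linear_combination -β (h₁, 1) (k₁, 1) * r₃ + β (h₁ * k₁, h₂) (1, k₂) * r₂ +
    β (h₁, 1) (k₁, h₂) * β (h₁ * k₁, h₂) (1, k₂) * r₅ -
    β (h₁ * k₁, h₂) (1, k₂) * r₁ + β (h₁, 1) (1, h₂) * r₄

theorem stmt17_general (NE NO : Type*) [CommGroup NE] [CommGroup NO]
    [Fintype NE] [Fintype NO]
    (β : (NE × NO) → (NE × NO) → ℂˣ)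
    (hcocycle : ∀ g h k : NE × NO,
      (β g h : ℂ) * β (g * h) k = (β h k : ℂ) * β g (h * k))
    (htriv : ∀ (hE : NE) (hO : NO),
      β (hE, (1 : NO)) ((1 : NE), hO) = β ((1 : NE), hO) (hE, (1 : NO))) :
    let tmul : ((NE × NO) → ℂ) → ((NE × NO) → ℂ) → ((NE × NO) → ℂ) :=
      fun a b n => ∑ h : NE × NO, (β h (h⁻¹ * n) : ℂ) * a h * b (h⁻¹ * n)
    let tensorMul : ((NE × NO) → ℂ) → ((NE × NO) → ℂ) → ((NE × NO) → ℂ) :=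
      fun a b n => ∑ h : NE × NO,
        (β (h.1, (1 : NO)) ((h.1⁻¹ * n.1), (1 : NO)) : ℂ) *
          (β ((1 : NE), h.2) ((1 : NE), (h.2⁻¹ * n.2)) : ℂ) *
          a h * b (h⁻¹ * n)
    let Ψ : ((NE × NO) → ℂ) → ((NE × NO) → ℂ) :=
      fun c n => (β (n.1, (1 : NO)) ((1 : NE), n.2) : ℂ) * c n
    IsLinearMap ℂ Ψ ∧ Function.Bijective Ψ ∧
      ∀ a b, Ψ (tensorMul a b) = tmul (Ψ a) (Ψ b) := by
  intro tmul tensorMul Ψ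
  have hsplit := cocycle_prod_eq_mul_coboundary (fun g h => (β g h : ℂ)) hcocycle
    fun m n => congrArg Units.val (htriv m n)
  refine ⟨⟨fun x y => funext fun n => mul_add _ _ _,
      fun c x => funext fun n => mul_left_comm _ _ _⟩,
    Function.Bijective.piMap fun n => Units.mulLeft_bijective _, fun a b => ?_⟩
  funext n
  exact mul_twistedConv_of_cohomologous (fun g => (β (g.1, 1) (1, g.2) : ℂ)) hsplit a b n

/-- Let `N = N_E × N_O` be a finite abelian group with a nondegenerate 2-cocycle `β`
valued in `ℂˣ`, such that the alternating form `⟨h₁,h₂⟩_β = β(h₁,h₂)/β(h₂,h₁)` is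
trivial on `N_E × N_O`.  Then the multiplication map
`ℂ^β N_E ⊗ ℂ^β N_O → ℂ^β N` is an isomorphism of algebras.  Identifying
`ℂ^β N_E ⊗ ℂ^β N_O` with functions on `N` (basis `T_{h_E} ⊗ T_{h_O}`), this map is
`Ψ(c)(h) = β((h₁,1),(1,h₂)) · c(h)`, and the claim is that `Ψ` is a linear bijection
carrying the tensor-product multiplication to the twisted multiplication of `ℂ^β N`. -/
theorem stmt17 (NE NO : Type*) [CommGroup NE] [CommGroup NO]
    [Fintype NE] [Fintype NO]
    (β : (NE × NO) → (NE × NO) → ℂˣ)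
    (hcocycle : ∀ g h k : NE × NO,
      (β g h : ℂ) * β (g * h) k = (β h k : ℂ) * β g (h * k))
    (hnondeg : ∀ h : NE × NO, (∀ h' : NE × NO, β h h' = β h' h) → h = 1)
    (htriv : ∀ (hE : NE) (hO : NO),
      β (hE, (1 : NO)) ((1 : NE), hO) = β ((1 : NE), hO) (hE, (1 : NO))) :
    let tmul : ((NE × NO) → ℂ) → ((NE × NO) → ℂ) → ((NE × NO) → ℂ) :=
      fun a b n => ∑ h : NE × NO, (β h (h⁻¹ * n) : ℂ) * a h * b (h⁻¹ * n)
    let tensorMul : ((NE × NO) → ℂ) → ((NE × NO) → ℂ) → ((NE × NO) → ℂ) :=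
      fun a b n => ∑ h : NE × NO,
        (β (h.1, (1 : NO)) ((h.1⁻¹ * n.1), (1 : NO)) : ℂ) *
          (β ((1 : NE), h.2) ((1 : NE), (h.2⁻¹ * n.2)) : ℂ) *
          a h * b (h⁻¹ * n)
    let Ψ : ((NE × NO) → ℂ) → ((NE × NO) → ℂ) :=
      fun c n => (β (n.1, (1 : NO)) ((1 : NE), n.2) : ℂ) * c n
    IsLinearMap ℂ Ψ ∧ Function.Bijective Ψ ∧
      ∀ a b, Ψ (tensorMul a b) = tmul (Ψ a) (Ψ b) :=
  stmt17_general NE NO β hcocycle htriv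
end

section
/- Let N be a finite abelian group and β a 2-cocycle on N with values in C^×. Then the center of the twisted group algebra C^β N is spanned by the elements T_h for h in the radical of the alternating form ⟨h1,h2⟩_β = β(h1,h2)/β(h2,h1). Consequently, C^β N is isomorphic to a matrix algebra over C if and only if this form is nondegenerate. -/
/-!
Since `T_h T_h' = ⟨h, h'⟩_β T_h' T_h`, an element is central exactly when it is supported on the
radical. Conjugation by `T_h` multiplies `T_g` by `⟨h, g⟩_β` up to a factor independent of `g`, and
`h ↦ ⟨h, g⟩_β` is a character. If the form is nondegenerate, orthogonality of characters makes a
weighted average of the conjugates of `a` equal to `|N| a(1) T_1`, so every nonzero two-sided ideal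
contains a unit: the algebra is simple, and Wedderburn–Artin over `ℂ` makes it a matrix algebra.
Conversely, the centre of a matrix algebra consists of scalars, so a radical element `h ≠ 1` would
make `T_h` a multiple of `T_1`.
-/

open Finset

namespace TwistedGroupAlgebra

def IsTwoCocycle {N : Type*} [Mul N] (β : N → N → ℂˣ) : Prop :=
  ∀ g h k : N, (β g h : ℂ) * β (g * h) k = (β h k : ℂ) * β g (h * k)

section Monoid

variable {N : Type*} [Monoid N] {β : N → N → ℂˣ} (hβ : IsTwoCocycle β)
include hβ

lemma IsTwoCocycle.one_left (g : N) : (β 1 g : ℂ) = β 1 1 := by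
  have := hβ 1 1 g
  simp only [one_mul] at this
  exact mul_right_cancel₀ (Units.ne_zero (β 1 g)) this.symm

lemma IsTwoCocycle.one_right (g : N) : (β g 1 : ℂ) = β 1 1 := by
  have := hβ g 1 1
  simp only [mul_one] at this
  exact mul_left_cancel₀ (Units.ne_zero (β g 1)) (this.trans (mul_comm _ _))

end Monoid

section Group

variable {N : Type*} [Group N] [Fintype N] (β : N → N → ℂˣ)

/-- The product of `ℂ^β N`, with `a : N → ℂ` standing for `∑ h, a h • T_h`
(so `T_g` is `Pi.single g 1`). -/
noncomputable def twistedMul : (N → ℂ) →ₗ[ℂ] (N → ℂ) →ₗ[ℂ] (N → ℂ) :=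
  LinearMap.mk₂ ℂ (fun a b n => ∑ h, (β h (h⁻¹ * n) : ℂ) * a h * b (h⁻¹ * n))
    (fun a a' b => by ext n; simp [mul_add, add_mul, sum_add_distrib])
    (fun c a b => by ext n; simp [mul_sum, mul_assoc, mul_left_comm])
    (fun a b b' => by ext n; simp [mul_add, sum_add_distrib])
    (fun c a b => by ext n; simp [mul_sum, mul_left_comm])

lemma twistedMul_apply (a b : N → ℂ) (n : N) :
    twistedMul β a b n = ∑ h, (β h (h⁻¹ * n) : ℂ) * a h * b (h⁻¹ * n) := rfl

variable {β}

lemma twistedMul_assoc (hβ : IsTwoCocycle β) (a b c : N → ℂ) :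
    twistedMul β (twistedMul β a b) c = twistedMul β a (twistedMul β b c) := by
  ext n
  simp only [twistedMul_apply, sum_mul, mul_sum]
  rw [sum_comm]
  refine sum_congr rfl fun k _ => (Fintype.sum_equiv (Equiv.mulLeft k) _ _ fun m => ?_).symm
  have key := hβ k m (m⁻¹ * (k⁻¹ * n))
  simp only [Equiv.coe_mulLeft, inv_mul_cancel_left, mul_inv_rev, mul_assoc,
    mul_inv_cancel_left] at key ⊢
  linear_combination (-(a k * b m * c (m⁻¹ * (k⁻¹ * n)))) * key

section Single

variable [DecidableEq N]

lemma twistedMul_single_left (g : N) (b : N → ℂ) (n : N) :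
    twistedMul β (Pi.single g 1) b n = β g (g⁻¹ * n) * b (g⁻¹ * n) := by
  rw [twistedMul_apply, sum_eq_single g (fun h _ hg => by simp [hg]) (by simp)]
  simp

lemma twistedMul_single_right (a : N → ℂ) (g n : N) :
    twistedMul β a (Pi.single g 1) n = β (n * g⁻¹) g * a (n * g⁻¹) := by
  rw [twistedMul_apply, sum_eq_single (n * g⁻¹) (fun h _ hh => ?_) (by simp)]
  · simp
  · rw [Pi.single_apply, if_neg (fun h' => hh ?_), mul_zero]
    rw [← h']; group

variable (hβ : IsTwoCocycle β)
include hβ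

lemma twistedMul_single_one_left (b : N → ℂ) :
    twistedMul β (Pi.single 1 1) b = (β 1 1 : ℂ) • b := by
  ext n
  rw [twistedMul_single_left, inv_one, one_mul, hβ.one_left, Pi.smul_apply, smul_eq_mul]

lemma twistedMul_single_one_right (a : N → ℂ) :
    twistedMul β a (Pi.single 1 1) = (β 1 1 : ℂ) • a := by
  ext n
  rw [twistedMul_single_right, inv_one, mul_one, hβ.one_right, Pi.smul_apply, smul_eq_mul]

end Single

lemma twistedMul_injective (hβ : IsTwoCocycle β) : Function.Injective (twistedMul β) := by
  classical
  intro a b hab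
  have := congrArg (fun f => (β 1 1 : ℂ)⁻¹ • f (Pi.single 1 1)) hab
  simpa [twistedMul_single_one_right hβ] using this

/-- `ℂ^β N` realised inside `End(N → ℂ)` through its left regular representation. -/
noncomputable def leftRegular (hβ : IsTwoCocycle β) : Subalgebra ℂ (Module.End ℂ (N → ℂ)) :=
  (LinearMap.range (twistedMul β)).toSubalgebra
    (by classical exact ⟨(β 1 1 : ℂ)⁻¹ • Pi.single 1 1, LinearMap.ext fun a => by
      simp [twistedMul_single_one_left hβ]⟩)
    (by
      rintro _ _ ⟨a, rfl⟩ ⟨b, rfl⟩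
      exact ⟨twistedMul β a b, LinearMap.ext (twistedMul_assoc hβ a b)⟩)

noncomputable def toLeftRegular (hβ : IsTwoCocycle β) : (N → ℂ) →ₗ[ℂ] leftRegular hβ :=
  (twistedMul β).codRestrict (leftRegular hβ).toSubmodule fun a => ⟨a, rfl⟩

variable (hβ : IsTwoCocycle β)

lemma toLeftRegular_bijective : Function.Bijective (toLeftRegular hβ) := by
  refine ⟨fun a b hab => twistedMul_injective hβ (congrArg Subtype.val hab), ?_⟩
  rintro ⟨_, a, rfl⟩
  exact ⟨a, rfl⟩

lemma toLeftRegular_twistedMul (a b : N → ℂ) :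
    toLeftRegular hβ (twistedMul β a b) = toLeftRegular hβ a * toLeftRegular hβ b :=
  Subtype.ext (LinearMap.ext (twistedMul_assoc hβ a b))

lemma toLeftRegular_single_one [DecidableEq N] :
    toLeftRegular hβ (Pi.single 1 1) = (β 1 1 : ℂ) • 1 :=
  Subtype.ext (LinearMap.ext (twistedMul_single_one_left hβ))

lemma exists_matrix_of_isSimpleRing [IsSimpleRing (leftRegular hβ)] :
    ∃ (k : ℕ) (Φ : (N → ℂ) → Matrix (Fin k) (Fin k) ℂ),
      Function.Bijective Φ ∧ IsLinearMap ℂ Φ ∧ ∀ a b, Φ (twistedMul β a b) = Φ a * Φ b := by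
  obtain ⟨k, -, ⟨e⟩⟩ := IsSimpleRing.exists_algEquiv_matrix_of_isAlgClosed ℂ (leftRegular hβ)
  refine ⟨k, e ∘ toLeftRegular hβ, e.bijective.comp (toLeftRegular_bijective hβ),
    (e.toLinearMap ∘ₗ toLeftRegular hβ).isLinear, fun a b => ?_⟩
  simp [toLeftRegular_twistedMul]

end Group

section CommGroup

variable {N : Type*} [CommGroup N] {β : N → N → ℂˣ}

/-- `h ↦ ⟨h, g⟩_β = β(h, g) / β(g, h)`. -/
noncomputable def pairingChar (hβ : IsTwoCocycle β) (g : N) : N →* ℂ where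
  toFun h := β h g / β g h
  map_one' := by simp [hβ.one_left, hβ.one_right]
  map_mul' h₁ h₂ := by
    have e₁ := hβ h₁ h₂ g
    have e₂ := hβ h₁ g h₂
    have e₃ := hβ g h₁ h₂
    rw [mul_comm h₂ g] at e₁
    rw [mul_comm h₁ g] at e₂
    rw [div_mul_div_comm, div_eq_div_iff (Units.ne_zero _)
      (mul_ne_zero (Units.ne_zero _) (Units.ne_zero _))]
    refine mul_right_cancel₀ (Units.ne_zero (β h₁ h₂)) ?_
    linear_combination ((β g h₁ : ℂ) * β g h₂) * e₁ - ((β h₂ g : ℂ) * β g h₁) * e₂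
      + ((β h₂ g : ℂ) * β h₁ g) * e₃

variable [Fintype N]

lemma sum_pairingChar_eq_zero (hβ : IsTwoCocycle β) {g : N} (hg : ∃ h, β g h ≠ β h g) :
    ∑ h, pairingChar hβ g h = 0 := by
  refine sum_hom_units_eq_zero _ fun h1 => ?_
  obtain ⟨h, hh⟩ := hg
  have := DFunLike.congr_fun h1 h
  rw [MonoidHom.one_apply, pairingChar, MonoidHom.coe_mk, OneHom.coe_mk,
    div_eq_one_iff_eq (Units.ne_zero _)] at this
  exact hh (Units.ext this).symm

variable (β) in
lemma twistedMul_comm_iff (c : N → ℂ) :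
    (∀ a, twistedMul β c a = twistedMul β a c) ↔ ∀ h : N, (∃ h', β h h' ≠ β h' h) → c h = 0 := by
  classical
  constructor
  · rintro hc h ⟨h', hne⟩
    have := congrFun (hc (Pi.single h' 1)) (h * h')
    rw [twistedMul_single_right, twistedMul_single_left, mul_inv_cancel_right, mul_comm h h',
      inv_mul_cancel_left] at this
    by_contra hch
    exact hne (Units.ext (mul_right_cancel₀ hch this))
  · intro hc a
    ext n
    refine Fintype.sum_equiv ((Equiv.inv N).trans (Equiv.mulRight n)) _ _ fun h => ?_
    simp only [Equiv.trans_apply, Equiv.inv_apply, Equiv.coe_mulRight, mul_inv_rev, inv_inv]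
    by_cases hch : c h = 0
    · simp [hch]
    · have hsym : β h (h⁻¹ * n) = β (h⁻¹ * n) h := by
        by_contra hne
        exact hch (hc h ⟨_, hne⟩)
      rw [hsym, mul_comm n⁻¹ h, inv_mul_cancel_right]
      ring

section Single

variable [DecidableEq N]

lemma twistedMul_conj_apply (hβ : IsTwoCocycle β) (h : N) (a : N → ℂ) (g : N) :
    twistedMul β (twistedMul β (Pi.single h 1) a) (Pi.single h⁻¹ 1) g
      = (β h h⁻¹ * β 1 1 : ℂ) * pairingChar hβ g h * a g := by
  have key := hβ g h h⁻¹
  rw [mul_inv_cancel, hβ.one_right, mul_comm g h] at key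
  rw [twistedMul_single_right, inv_inv, twistedMul_single_left, mul_comm g h,
    inv_mul_cancel_left]
  simp only [pairingChar, MonoidHom.coe_mk, OneHom.coe_mk]
  field_simp
  linear_combination a g * key

lemma sum_conj_eq_smul_single_one (hβ : IsTwoCocycle β)
    (hnd : ∀ g : N, (∀ h, β g h = β h g) → g = 1) (a : N → ℂ) :
    ∑ h, (β h h⁻¹ * β 1 1 : ℂ)⁻¹ •
        twistedMul β (twistedMul β (Pi.single h 1) a) (Pi.single h⁻¹ 1)
      = ((Fintype.card N : ℂ) * a 1) • Pi.single 1 1 := by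
  ext g
  have hu : ∀ h : N, (β h h⁻¹ * β 1 1 : ℂ) ≠ 0 := fun h =>
    mul_ne_zero (Units.ne_zero _) (Units.ne_zero _)
  simp only [Finset.sum_apply, Pi.smul_apply, smul_eq_mul, twistedMul_conj_apply hβ, ← mul_assoc,
    inv_mul_cancel₀ (hu _), one_mul, ← sum_mul]
  by_cases hg : g = 1
  · subst hg
    simp [pairingChar, hβ.one_left, hβ.one_right]
  · rw [sum_pairingChar_eq_zero hβ (not_forall.mp (mt (hnd g) hg)), Pi.single_eq_of_ne hg]
    simp

end Single

lemma isSimpleRing_leftRegular (hβ : IsTwoCocycle β)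
    (hnd : ∀ g : N, (∀ h, β g h = β h g) → g = 1) : IsSimpleRing (leftRegular hβ) := by
  classical
  refine .of_eq_bot_or_eq_top fun I => or_iff_not_imp_left.mpr fun hI => ?_
  obtain ⟨_, hxI, hx0⟩ := SetLike.exists_of_lt (bot_lt_iff_ne_bot.mpr hI)
  obtain ⟨a, rfl⟩ := (toLeftRegular_bijective hβ).2 ‹_›
  obtain ⟨g₀, hg₀⟩ := Function.ne_iff.mp fun ha : a = 0 => hx0 (by simp [ha])
  set a' := twistedMul β a (Pi.single g₀⁻¹ 1)
  have ha' : a' 1 ≠ 0 := by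
    simpa [a', twistedMul_single_right] using mul_ne_zero (Units.ne_zero (β g₀ g₀⁻¹)) hg₀
  have ha'I : toLeftRegular hβ a' ∈ I := by
    rw [toLeftRegular_twistedMul]
    exact I.mul_mem_right _ _ hxI
  have hcI : toLeftRegular hβ (((Fintype.card N : ℂ) * a' 1) • Pi.single 1 1) ∈ I := by
    rw [← sum_conj_eq_smul_single_one hβ hnd, map_sum]
    refine sum_mem fun h _ => ?_
    rw [map_smul, toLeftRegular_twistedMul, toLeftRegular_twistedMul, ← smul_mul_assoc,
      ← smul_mul_assoc]
    exact I.mul_mem_right _ _ (I.mul_mem_left _ _ ha'I)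
  rw [map_smul, toLeftRegular_single_one, smul_smul] at hcI
  have hc : (Fintype.card N : ℂ) * a' 1 * β 1 1 ≠ 0 :=
    mul_ne_zero (mul_ne_zero (Nat.cast_ne_zero.mpr Fintype.card_ne_zero) ha') (Units.ne_zero _)
  have := I.mul_mem_left (algebraMap ℂ _ ((Fintype.card N : ℂ) * a' 1 * β 1 1)⁻¹) _ hcI
  rw [Algebra.algebraMap_eq_smul_one, smul_mul_smul_comm, inv_mul_cancel₀ hc, one_smul,
    mul_one] at this
  exact I.one_mem_iff.mp this

lemma eq_one_of_matrix_model (hβ : IsTwoCocycle β) {k : ℕ}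
    {Φ : (N → ℂ) → Matrix (Fin k) (Fin k) ℂ} (hΦ : Function.Bijective Φ) (hlin : IsLinearMap ℂ Φ)
    (hmul : ∀ a b, Φ (twistedMul β a b) = Φ a * Φ b) {h : N} (hh : ∀ h', β h h' = β h' h) :
    h = 1 := by
  classical
  have hcentral : ∀ a, twistedMul β (Pi.single h 1) a = twistedMul β a (Pi.single h 1) := by
    refine (twistedMul_comm_iff β _).mpr fun g ⟨h', hne⟩ => Pi.single_eq_of_ne ?_ _
    rintro rfl
    exact hne (hh h')
  obtain ⟨r, hr⟩ : Φ (Pi.single h 1) ∈ Set.range (Matrix.scalar (Fin k)) := by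
    refine Matrix.mem_range_scalar_of_commute_single fun i j _ => ?_
    obtain ⟨a, ha⟩ := hΦ.2 (Matrix.single i j 1)
    rw [← ha, Commute, SemiconjBy, ← hmul, ← hmul, hcentral]
  have hone : Φ (Pi.single 1 1) = (β 1 1 : ℂ) • 1 := by
    obtain ⟨a, ha⟩ := hΦ.2 1
    simpa [twistedMul_single_one_left hβ, hlin.map_smul, ha] using
      (hmul (Pi.single 1 1) a).symm
  have hsingle : Pi.single h 1 = (r / β 1 1) • (Pi.single 1 1 : N → ℂ) := by
    refine hΦ.1 ?_
    rw [hlin.map_smul, hone, smul_smul, div_mul_cancel₀ _ (Units.ne_zero _), ← hr,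
      Matrix.scalar_apply, Matrix.smul_one_eq_diagonal]
  by_contra hne
  simpa [Pi.single_eq_of_ne hne] using congrFun hsingle h

lemma exists_matrix_iff (hβ : IsTwoCocycle β) :
    (∃ (k : ℕ) (Φ : (N → ℂ) → Matrix (Fin k) (Fin k) ℂ),
        Function.Bijective Φ ∧ IsLinearMap ℂ Φ ∧ ∀ a b, Φ (twistedMul β a b) = Φ a * Φ b) ↔
      ∀ h : N, (∀ h', β h h' = β h' h) → h = 1 := by
  refine ⟨fun ⟨_, _, hΦ, hlin, hmul⟩ _ hh => eq_one_of_matrix_model hβ hΦ hlin hmul hh,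
    fun hnd => ?_⟩
  have := isSimpleRing_leftRegular hβ hnd
  exact exists_matrix_of_isSimpleRing hβ

end CommGroup

end TwistedGroupAlgebra

/-- For a finite abelian group `N` with a 2-cocycle `β : N × N → ℂˣ`, the center of
the twisted group algebra `ℂ^β N` is spanned by the `T_h` with `h` in the radical of
the form `⟨h₁,h₂⟩_β = β(h₁,h₂)/β(h₂,h₁)`; consequently `ℂ^β N` is isomorphic to a
matrix algebra over `ℂ` if and only if this form is nondegenerate. -/
theorem stmt18 (N : Type*) [CommGroup N] [Fintype N]
    (β : N → N → ℂˣ)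
    (hcocycle : ∀ g h k : N,
      (β g h : ℂ) * β (g * h) k = (β h k : ℂ) * β g (h * k)) :
    let tmul : (N → ℂ) → (N → ℂ) → (N → ℂ) :=
      fun a b n => ∑ h : N, (β h (h⁻¹ * n) : ℂ) * a h * b (h⁻¹ * n)
    -- the center is spanned by `T_h` for `h` in the radical of the form
    ((∀ c : N → ℂ, (∀ a, tmul c a = tmul a c) ↔
        (∀ h : N, (∃ h' : N, β h h' ≠ β h' h) → c h = 0)) ∧
      -- `ℂ^β N` is a matrix algebra iff the form is nondegenerate
      ((∃ (k : ℕ) (Φ : (N → ℂ) → Matrix (Fin k) (Fin k) ℂ),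
          Function.Bijective Φ ∧ IsLinearMap ℂ Φ ∧
          ∀ a b, Φ (tmul a b) = Φ a * Φ b) ↔
        (∀ h : N, (∀ h' : N, β h h' = β h' h) → h = 1))) :=
  ⟨TwistedGroupAlgebra.twistedMul_comm_iff β, TwistedGroupAlgebra.exists_matrix_iff hcocycle⟩
end
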